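/- arXiv:2505.00291 — 5 statements merged into one kernel-verified Lean document; each statement's English description precedes it below -/
import Mathlib

section
/- Let G and H be connected featured graphs, v ∈ V(G), w ∈ V(H), and let t ≥ 2·max(|G|, |H|). Then mpc^t_G(v) = mpc^t_H(w) if and only if mpc^s_G(v) = mpc^s_H(w) for all s ≥ 1. -/
/-- A featured graph: a finite simple graph on `Fin n` with a feature map to binary strings. -/
structure FeaturedGraph where
  n : ℕ
  adj : SimpleGraph (Fin n)
  adjDec : DecidableRel adj.Adj
  feature : Fin n → List Bool

/-- The neighbors of a vertex, as a finset. -/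
def FeaturedGraph.nbrs (G : FeaturedGraph) (v : Fin G.n) : Finset (Fin G.n) :=
  letI := G.adjDec
  Finset.univ.filter (fun w => G.adj.Adj v w)

/-- The type of Color Refinement colors after `t` rounds. -/
def Color : ℕ → Type := fun t => Nat.rec (List Bool) (fun _ C => C × Multiset C) t

/-- The message-passing (Color Refinement) color of a vertex after `t` rounds. -/
def mpc (G : FeaturedGraph) : (t : ℕ) → Fin G.n → Color t
  | 0, v => (G.feature v : List Bool)
  | t + 1, v =>
      ((mpc G t v, (G.nbrs v).val.map (mpc G t)) : Color t × Multiset (Color t))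


namespace MPCAux

variable (G H : FeaturedGraph)

def cc (t : ℕ) : Fin G.n ⊕ Fin H.n → Color t
  | .inl v => mpc G t v
  | .inr w => mpc H t w

def nbrsS : Fin G.n ⊕ Fin H.n → Multiset (Fin G.n ⊕ Fin H.n)
  | .inl v => (G.nbrs v).val.map Sum.inl
  | .inr w => (H.nbrs w).val.map Sum.inr

def fstC (t : ℕ) : Color (t+1) → Color t := Prod.fst
def sndC (t : ℕ) : Color (t+1) → Multiset (Color t) := Prod.snd

lemma cc_succ (t : ℕ) (x : Fin G.n ⊕ Fin H.n) :
    cc G H (t+1) x = ((cc G H t x, (nbrsS G H x).map (cc G H t)) : Color t × Multiset (Color t)) := by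
  cases x with
  | inl v => show mpc G (t+1) v = _; simp [mpc, cc, nbrsS, Multiset.map_map]; rfl
  | inr w => show mpc H (t+1) w = _; simp [mpc, cc, nbrsS, Multiset.map_map]; rfl

lemma fst_cc (t : ℕ) (x) : fstC t (cc G H (t+1) x) = cc G H t x := by
  rw [cc_succ]; rfl

lemma snd_cc (t : ℕ) (x) : sndC t (cc G H (t+1) x) = (nbrsS G H x).map (cc G H t) := by
  rw [cc_succ]; rfl

lemma cc_fst {t : ℕ} {x y} (h : cc G H (t+1) x = cc G H (t+1) y) :
    cc G H t x = cc G H t y := by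
  rw [← fst_cc G H t x, ← fst_cc G H t y, h]

lemma cc_snd {t : ℕ} {x y} (h : cc G H (t+1) x = cc G H (t+1) y) :
    (nbrsS G H x).map (cc G H t) = (nbrsS G H y).map (cc G H t) := by
  rw [← snd_cc G H t x, ← snd_cc G H t y, h]

def Stab (t : ℕ) : Prop :=
  ∀ x y, cc G H t x = cc G H t y → cc G H (t+1) x = cc G H (t+1) y

lemma stab_succ {t : ℕ} (hst : Stab G H t) : Stab G H (t+1) := by
  intro x y h
  have hft : Function.FactorsThrough (cc G H (t+1)) (cc G H t) := fun a b hab => hst a b hab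
  have key : (nbrsS G H x).map (cc G H (t+1)) = (nbrsS G H y).map (cc G H (t+1)) := by
    have e : ∀ z : Fin G.n ⊕ Fin H.n,
        cc G H (t+1) z = Function.extend (cc G H t) (cc G H (t+1)) (fun _ => cc G H (t+1) x) (cc G H t z) :=
      fun z => (hft.extend_apply _ z).symm
    calc (nbrsS G H x).map (cc G H (t+1))
        = ((nbrsS G H x).map (cc G H t)).map
            (Function.extend (cc G H t) (cc G H (t+1)) (fun _ => cc G H (t+1) x)) := by
          rw [Multiset.map_map]; exact Multiset.map_congr rfl (fun a _ => e a)
      _ = ((nbrsS G H y).map (cc G H t)).map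
            (Function.extend (cc G H t) (cc G H (t+1)) (fun _ => cc G H (t+1) x)) := by
          rw [cc_snd G H h]
      _ = (nbrsS G H y).map (cc G H (t+1)) := by
          rw [Multiset.map_map]; exact (Multiset.map_congr rfl (fun a _ => e a)).symm
  exact (cc_succ G H (t+1) x).trans ((congrArg₂ Prod.mk h key).trans (cc_succ G H (t+1) y).symm)

lemma stab_mono {t u : ℕ} (h : Stab G H t) (htu : t ≤ u) : Stab G H u := by
  induction u, htu using Nat.le_induction with
  | base => exact h
  | succ n hn ih => exact stab_succ G H ih

noncomputable def kcard (t : ℕ) : ℕ :=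
  letI := Classical.decEq (Color t)
  (Finset.univ.image (cc G H t)).card

lemma kcard_lt {t : ℕ} (hn : ¬ Stab G H t) : kcard G H t < kcard G H (t+1) := by
  classical
  unfold Stab at hn
  push_neg at hn
  obtain ⟨x, y, hxy, hne⟩ := hn
  unfold kcard
  have himg : (Finset.univ.image (cc G H t)) =
      (Finset.univ.image (cc G H (t+1))).image (fstC t) := by
    rw [Finset.image_image]
    congr 1
    funext z
    exact (fst_cc G H t z).symm
  rw [himg]
  refine lt_of_le_of_ne Finset.card_image_le ?_
  intro hcard
  have hinj := Finset.injOn_of_card_image_eq hcard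
  exact hne (hinj (Finset.mem_image_of_mem _ (Finset.mem_univ x))
    (Finset.mem_image_of_mem _ (Finset.mem_univ y))
    (by rw [fst_cc, fst_cc]; exact hxy))

lemma kcard_le (t : ℕ) : kcard G H t ≤ G.n + H.n := by
  classical
  unfold kcard
  refine Finset.card_image_le.trans ?_
  simp [Finset.card_univ]

lemma kcard_pos (t : ℕ) (hne : Nonempty (Fin G.n ⊕ Fin H.n)) : 1 ≤ kcard G H t := by
  classical
  unfold kcard
  refine Finset.card_pos.mpr ?_
  exact (Finset.univ_nonempty).image _

lemma exists_stab (hne : Nonempty (Fin G.n ⊕ Fin H.n)) :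
    ∃ s < G.n + H.n, Stab G H s := by
  by_contra hcon
  push_neg at hcon
  have key : ∀ m, m ≤ G.n + H.n → m + kcard G H 0 ≤ kcard G H m := by
    intro m hm
    induction m with
    | zero => simp
    | succ k ih =>
      have h1 : k + kcard G H 0 ≤ kcard G H k := ih (Nat.le_of_succ_le hm)
      have h2 : kcard G H k < kcard G H (k+1) := kcard_lt G H (hcon k (Nat.lt_of_succ_le hm))
      omega
  have := key (G.n + H.n) le_rfl
  have hpos := kcard_pos G H 0 hne
  have hle := kcard_le G H (G.n + H.n)
  omega

lemma cc_down {x y} {s r : ℕ} (hrs : r ≤ s) (h : cc G H s x = cc G H s y) :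
    cc G H r x = cc G H r y := by
  induction s with
  | zero => obtain rfl : r = 0 := Nat.le_zero.mp hrs; exact h
  | succ n ih =>
    rcases Nat.eq_or_lt_of_le hrs with rfl | hlt
    · exact h
    · exact ih (Nat.lt_succ_iff.mp hlt) (cc_fst G H h)

lemma cc_up {x y} {t0 s : ℕ} (hstab : Stab G H t0) (hts : t0 ≤ s)
    (h : cc G H t0 x = cc G H t0 y) : cc G H s x = cc G H s y := by
  induction s, hts using Nat.le_induction with
  | base => exact h
  | succ n hn ih => exact stab_mono G H hstab hn x y ih

end MPCAux

/-- For connected graphs and `t ≥ 2·max(|G|,|H|)`, equality of the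
round-`t` colors is equivalent to equality of the colors at every round `s ≥ 1`. -/
theorem mpc_stabilize (G H : FeaturedGraph) (hG : G.adj.Connected) (hH : H.adj.Connected)
    (v : Fin G.n) (w : Fin H.n) (t : ℕ) (ht : 2 * max G.n H.n ≤ t) :
    mpc G t v = mpc H t w ↔ ∀ s, 1 ≤ s → mpc G s v = mpc H s w := by
  have hGpos : 0 < G.n := Fin.pos_iff_nonempty.mpr hG.nonempty
  have hHpos : 0 < H.n := Fin.pos_iff_nonempty.mpr hH.nonempty
  have hNt : G.n + H.n ≤ t := by
    have h1 : G.n ≤ max G.n H.n := le_max_left _ _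
    have h2 : H.n ≤ max G.n H.n := le_max_right _ _
    omega
  constructor
  · intro h s hs
    have hne : Nonempty (Fin G.n ⊕ Fin H.n) := ⟨.inl ⟨0, hGpos⟩⟩
    obtain ⟨t0, ht0, hstab⟩ := MPCAux.exists_stab G H hne
    have hcc : MPCAux.cc G H t (.inl v) = MPCAux.cc G H t (.inr w) := h
    rcases le_or_gt s t with hst | hts
    · exact MPCAux.cc_down G H hst hcc
    · have ht0t : t0 ≤ t := by omega
      have hstabt : MPCAux.Stab G H t := MPCAux.stab_mono G H hstab ht0t
      exact MPCAux.cc_up G H hstabt (le_of_lt hts) hcc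
  · intro h
    have h1t : 1 ≤ t := by omega
    exact h t h1t
end

section
/- Let G and H be connected featured graphs, v ∈ V(G), w ∈ V(H). Then the following are equivalent: (1) there exists a weak node sketch S that is realised by both (G, v) and (H, w); (2) mpc^s_G(v) = mpc^s_H(w) for all s ≥ 1. -/
/-- An ℓ-dimensional weak node sketch. -/
structure WeakSketch (ℓ : ℕ) where
  A : Matrix (Fin ℓ) (Fin ℓ) ℕ
  c : Fin ℓ → List Bool
  k : Fin ℓ

/-- A rooted featured graph `(G, v)` realises a weak node sketch `S` via a partition of the
vertex set of the connected component of `v`. -/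
def Realises {ℓ : ℕ} (S : WeakSketch ℓ) (G : FeaturedGraph) (v : Fin G.n) : Prop :=
  ∃ V : Fin ℓ → Finset (Fin G.n),
    (∀ i, (V i).Nonempty) ∧
    (∀ i j, i ≠ j → Disjoint (V i) (V j)) ∧
    (∀ u : Fin G.n, (∃ i, u ∈ V i) ↔ G.adj.Reachable v u) ∧
    v ∈ V S.k ∧
    (∀ i, ∀ u ∈ V i, G.feature u = S.c i) ∧
    (∀ i j, ∀ u ∈ V i, ((G.nbrs u).filter (· ∈ V j)).card = S.A i j)

instance colorDecEq : (t : ℕ) → DecidableEq (Color t)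
  | 0 => inferInstanceAs (DecidableEq (List Bool))
  | t+1 => letI := colorDecEq t; inferInstanceAs (DecidableEq (Color t × Multiset (Color t)))

def featOf : (t : ℕ) → Color t → List Bool
  | 0, a => a
  | t+1, a => featOf t (a : Color t × Multiset (Color t)).1

lemma featOf_mpc (G : FeaturedGraph) : ∀ (t : ℕ) (u : Fin G.n), featOf t (mpc G t u) = G.feature u
  | 0, _ => rfl
  | t+1, u => featOf_mpc G t u

lemma mem_nbrs (G : FeaturedGraph) (u x : Fin G.n) : x ∈ G.nbrs u ↔ G.adj.Adj u x := by
  letI := G.adjDec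
  simp [FeaturedGraph.nbrs]

def nbm (G : FeaturedGraph) (t : ℕ) (u : Fin G.n) : Multiset (Color t) :=
  (G.nbrs u).val.map (mpc G t)

def pfst {t : ℕ} (a : Color (t+1)) : Color t := (a : Color t × Multiset (Color t)).1
def psnd {t : ℕ} (a : Color (t+1)) : Multiset (Color t) := (a : Color t × Multiset (Color t)).2

lemma mpc_succ (G : FeaturedGraph) (t : ℕ) (u : Fin G.n) :
    mpc G (t+1) u = (show Color (t+1) from (mpc G t u, nbm G t u)) := rfl

lemma color_ext {t : ℕ} {a b : Color (t+1)} (h1 : pfst a = pfst b) (h2 : psnd a = psnd b) :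
    a = b := by
  have ha : a = (show Color (t+1) from (pfst a, psnd a)) := rfl
  have hb : b = (show Color (t+1) from (pfst b, psnd b)) := rfl
  rw [ha, hb, h1, h2]

section Combined
variable (G H : FeaturedGraph)

def cmpc (t : ℕ) : Fin G.n ⊕ Fin H.n → Color t := Sum.elim (mpc G t) (mpc H t)
def cnb (t : ℕ) : Fin G.n ⊕ Fin H.n → Multiset (Color t) := Sum.elim (nbm G t) (nbm H t)

lemma pfst_cmpc (t : ℕ) (x : Fin G.n ⊕ Fin H.n) : pfst (cmpc G H (t+1) x) = cmpc G H t x := by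
  cases x <;> rfl

lemma psnd_cmpc (t : ℕ) (x : Fin G.n ⊕ Fin H.n) : psnd (cmpc G H (t+1) x) = cnb G H t x := by
  cases x <;> rfl

lemma cmpc_down {t : ℕ} {x y : Fin G.n ⊕ Fin H.n}
    (h : cmpc G H (t+1) x = cmpc G H (t+1) y) : cmpc G H t x = cmpc G H t y := by
  have := congrArg pfst h
  rwa [pfst_cmpc, pfst_cmpc] at this

noncomputable def numColors (t : ℕ) : ℕ := (Finset.univ.image (cmpc G H t)).card

lemma image_pfst (t : ℕ) :
    (Finset.univ.image (cmpc G H (t+1))).image pfst = Finset.univ.image (cmpc G H t) := by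
  rw [Finset.image_image]
  exact Finset.image_congr (fun x _ => pfst_cmpc G H t x)

lemma numColors_mono (t : ℕ) : numColors G H t ≤ numColors G H (t+1) := by
  rw [numColors, ← image_pfst]
  exact Finset.card_image_le

lemma exists_stable : ∃ T, numColors G H T = numColors G H (T+1) := by
  by_contra hne
  push_neg at hne
  have hstrict : ∀ t, numColors G H t < numColors G H (t+1) :=
    fun t => lt_of_le_of_ne (numColors_mono G H t) (hne t)
  have hlow : ∀ t, t ≤ numColors G H t := by
    intro t
    induction t with
    | zero => exact Nat.zero_le _
    | succ t ih => exact Nat.lt_of_le_of_lt ih (hstrict t)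
  have hbd : ∀ t, numColors G H t ≤ G.n + H.n := by
    intro t
    calc numColors G H t ≤ (Finset.univ : Finset (Fin G.n ⊕ Fin H.n)).card :=
          Finset.card_image_le
      _ = G.n + H.n := by simp
  have := (hlow (G.n + H.n + 1)).trans (hbd (G.n + H.n + 1))
  omega

lemma stab_one {T : ℕ} (hT : numColors G H T = numColors G H (T+1)) :
    ∀ x y, cmpc G H T x = cmpc G H T y → cmpc G H (T+1) x = cmpc G H (T+1) y := by
  intro x y h
  have hinj : Set.InjOn (pfst (t := T)) ↑(Finset.univ.image (cmpc G H (T+1))) := by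
    apply Finset.injOn_of_card_image_eq
    rw [image_pfst]
    unfold numColors at hT
    exact hT
  have hx : cmpc G H (T+1) x ∈ Finset.univ.image (cmpc G H (T+1)) :=
    Finset.mem_image_of_mem _ (Finset.mem_univ x)
  have hy : cmpc G H (T+1) y ∈ Finset.univ.image (cmpc G H (T+1)) :=
    Finset.mem_image_of_mem _ (Finset.mem_univ y)
  exact hinj hx hy (by rw [pfst_cmpc, pfst_cmpc, h])

lemma stab_prop {T : ℕ} (hT : numColors G H T = numColors G H (T+1)) :
    ∀ (s : ℕ) (x y : Fin G.n ⊕ Fin H.n),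
      cmpc G H T x = cmpc G H T y → cmpc G H (T+s) x = cmpc G H (T+s) y := by
  classical
  intro s
  induction s with
  | zero => exact fun x y h => h
  | succ s ih =>
    intro x y h
    have h1 : cmpc G H (T+1) x = cmpc G H (T+1) y := stab_one G H hT x y h
    have hx0 : ∃ z : Fin G.n ⊕ Fin H.n, True := ⟨x, trivial⟩
    set hfun : Color T → Color (T+s) := fun a =>
      if ha : ∃ z, cmpc G H T z = a then cmpc G H (T+s) ha.choose else cmpc G H (T+s) x
      with hfun_def
    have hh : ∀ z, cmpc G H (T+s) z = hfun (cmpc G H T z) := by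
      intro z
      have hz : ∃ z', cmpc G H T z' = cmpc G H T z := ⟨z, rfl⟩
      rw [hfun_def]
      simp only [dif_pos hz]
      exact (ih hz.choose z hz.choose_spec).symm
    have hcnb : ∀ z, cnb G H (T+s) z = Multiset.map hfun (cnb G H T z) := by
      intro z
      cases z with
      | inl u =>
        show nbm G (T+s) u = Multiset.map hfun (nbm G T u)
        rw [nbm, nbm, Multiset.map_map]
        exact Multiset.map_congr rfl (fun x _ => hh (Sum.inl x))
      | inr u =>
        show nbm H (T+s) u = Multiset.map hfun (nbm H T u)
        rw [nbm, nbm, Multiset.map_map]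
        exact Multiset.map_congr rfl (fun x _ => hh (Sum.inr x))
    show cmpc G H ((T+s)+1) x = cmpc G H ((T+s)+1) y
    apply color_ext
    · rw [pfst_cmpc, pfst_cmpc]
      exact ih x y h
    · rw [psnd_cmpc, psnd_cmpc, hcnb, hcnb]
      have : cnb G H T x = cnb G H T y := by
        rw [← psnd_cmpc, ← psnd_cmpc, h1]
      rw [this]

end Combined

lemma reach_color (G H : FeaturedGraph) {T : ℕ} (v : Fin G.n) (w : Fin H.n)
    (hpre : G.adj.Preconnected)
    (hvw : mpc G T v = mpc H T w)
    (hnb : ∀ (u : Fin G.n) (x : Fin H.n), mpc G T u = mpc H T x → nbm G T u = nbm H T x) :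
    ∀ u : Fin G.n, ∃ x : Fin H.n, mpc G T u = mpc H T x := by
  intro u
  have hr := hpre v u
  rw [SimpleGraph.reachable_iff_reflTransGen] at hr
  induction hr with
  | refl => exact ⟨w, hvw⟩
  | @tail b c hp hadj ih =>
    obtain ⟨x, hx⟩ := ih
    have h2 := hnb _ _ hx
    have hcmem : c ∈ (G.nbrs b).val := Finset.mem_val.mpr ((mem_nbrs G b c).mpr hadj)
    have hc : mpc G T c ∈ nbm G T b := Multiset.mem_map_of_mem _ hcmem
    rw [h2] at hc
    obtain ⟨y, _, hy⟩ := Multiset.mem_map.mp hc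
    exact ⟨y, hy.symm⟩


def skc {ℓ : ℕ} (S : WeakSketch ℓ) : (t : ℕ) → Fin ℓ → Color t
  | 0, i => S.c i
  | t+1, i =>
      (show Color (t+1) from
        (skc S t i, ∑ j : Fin ℓ, S.A i j • ({skc S t j} : Multiset (Color t))))

lemma realises_mpc {ℓ : ℕ} (S : WeakSketch ℓ) (G : FeaturedGraph) (v : Fin G.n)
    (h : Realises S G v) : ∀ t, mpc G t v = skc S t S.k := by
  classical
  obtain ⟨V, hne, hdisj, hcov, hk, hc, hA⟩ := h
  suffices Hyp : ∀ t i u, u ∈ V i → mpc G t u = skc S t i from fun t => Hyp t S.k v hk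
  intro t
  induction t with
  | zero => intro i u hu; exact hc i u hu
  | succ t ih =>
    intro i u hu
    have hreach : ∀ x ∈ G.nbrs u, ∃ j, x ∈ V j := by
      intro x hx
      apply (hcov x).mpr
      exact ((hcov u).mp ⟨i, hu⟩).trans
        (SimpleGraph.Adj.reachable ((mem_nbrs G u x).mp hx))
    have hsplit : G.nbrs u = Finset.univ.biUnion (fun j => (G.nbrs u).filter (· ∈ V j)) := by
      ext x
      simp only [Finset.mem_biUnion, Finset.mem_filter, Finset.mem_univ, true_and]
      constructor
      · intro hx
        obtain ⟨j, hj⟩ := hreach x hx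
        exact ⟨j, hx, hj⟩
      · rintro ⟨j, hx, _⟩
        exact hx
    have hpd : ((Finset.univ : Finset (Fin ℓ)) : Set (Fin ℓ)).PairwiseDisjoint
        (fun j => (G.nbrs u).filter (· ∈ V j)) := by
      intro a _ b _ hab
      refine Finset.disjoint_left.mpr ?_
      intro x hxa hxb
      exact Finset.disjoint_left.mp (hdisj a b hab)
        (Finset.mem_filter.mp hxa).2 (Finset.mem_filter.mp hxb).2
    have key : nbm G t u = ∑ j : Fin ℓ, S.A i j • ({skc S t j} : Multiset (Color t)) := by
      have h1 : nbm G t u = ∑ x ∈ G.nbrs u, ({mpc G t x} : Multiset (Color t)) := by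
        rw [Finset.sum_eq_multiset_sum]
        have hcomp : (fun x => ({mpc G t x} : Multiset (Color t)))
            = (fun a => ({a} : Multiset (Color t))) ∘ mpc G t := rfl
        rw [hcomp, ← Multiset.map_map, Multiset.sum_map_singleton]
        rfl
      rw [h1, hsplit, Finset.sum_biUnion hpd]
      refine Finset.sum_congr rfl ?_
      intro j _
      have hcg : ∀ x ∈ (G.nbrs u).filter (· ∈ V j),
          ({mpc G t x} : Multiset (Color t)) = {skc S t j} := by
        intro x hx
        rw [ih j x (Finset.mem_filter.mp hx).2]
      rw [Finset.sum_congr rfl hcg, Finset.sum_const, hA i j u hu]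
    apply color_ext
    · show mpc G t u = skc S t i
      exact ih i u hu
    · show nbm G t u = ∑ j : Fin ℓ, S.A i j • ({skc S t j} : Multiset (Color t))
      exact key

lemma count_nbm (G : FeaturedGraph) (T : ℕ) (u : Fin G.n) (a : Color T)
    [DecidablePred (fun x => mpc G T x = a)] :
    ((G.nbrs u).filter (fun x => mpc G T x = a)).card = Multiset.count a (nbm G T u) := by
  rw [nbm, Multiset.count_map, Finset.card_def, Finset.filter_val]
  congr 1
  apply Multiset.filter_congr
  intro x _
  exact eq_comm

/-- For connected rooted featured graphs, realising a common weak node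
sketch is equivalent to having equal Color Refinement colors at every round `s ≥ 1`. -/
theorem weak_sketch_iff_mpc (G H : FeaturedGraph)
    (hG : G.adj.Connected) (hH : H.adj.Connected) (v : Fin G.n) (w : Fin H.n) :
    (∃ (ℓ : ℕ) (S : WeakSketch ℓ), Realises S G v ∧ Realises S H w) ↔
      (∀ s, 1 ≤ s → mpc G s v = mpc H s w) := by
  constructor
  · rintro ⟨ℓ, S, hGv, hHw⟩ s _
    rw [realises_mpc S G v hGv s, realises_mpc S H w hHw s]
  · intro hcol
    classical
    obtain ⟨T₀, hT₀⟩ := exists_stable G H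
    set T := T₀ + 1 with hTdef
    have hstab : ∀ x y, cmpc G H T x = cmpc G H T y →
        cmpc G H (T+1) x = cmpc G H (T+1) y := by
      intro x y h
      have h0 : cmpc G H T₀ x = cmpc G H T₀ y := cmpc_down G H h
      exact stab_prop G H hT₀ 2 x y h0
    have hnb : ∀ x y, cmpc G H T x = cmpc G H T y → cnb G H T x = cnb G H T y := by
      intro x y h
      have h2 := congrArg psnd (hstab x y h)
      rwa [psnd_cmpc, psnd_cmpc] at h2
    have hnbGG : ∀ u u' : Fin G.n, mpc G T u = mpc G T u' → nbm G T u = nbm G T u' :=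
      fun u u' h => hnb (Sum.inl u) (Sum.inl u') h
    have hnbGH : ∀ (u : Fin G.n) (x : Fin H.n), mpc G T u = mpc H T x →
        nbm G T u = nbm H T x :=
      fun u x h => hnb (Sum.inl u) (Sum.inr x) h
    have hnbHG : ∀ (x : Fin H.n) (u : Fin G.n), mpc H T x = mpc G T u →
        nbm H T x = nbm G T u :=
      fun x u h => hnb (Sum.inr x) (Sum.inl u) h
    have hvw : mpc G T v = mpc H T w := hcol T (by omega)
    have hGH := reach_color G H v w hG.preconnected hvw hnbGH
    have hHG := reach_color H G w v hH.preconnected hvw.symm hnbHG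
    set CG := Finset.univ.image (mpc G T) with hCGdef
    set CH := Finset.univ.image (mpc H T) with hCHdef
    have hCC : CG = CH := by
      apply Finset.Subset.antisymm
      · intro a ha
        obtain ⟨u, _, hu⟩ := Finset.mem_image.mp ha
        obtain ⟨x, hx⟩ := hGH u
        exact Finset.mem_image.mpr ⟨x, Finset.mem_univ x, by rw [← hx, hu]⟩
      · intro a ha
        obtain ⟨x, _, hx⟩ := Finset.mem_image.mp ha
        obtain ⟨u, hu⟩ := hHG x
        exact Finset.mem_image.mpr ⟨u, Finset.mem_univ u, by rw [← hu, hx]⟩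
    set ℓ := CG.card with hldef
    set e := CG.equivFin with hedef
    set col : Fin ℓ → Color T := fun i => ((e.symm i : CG) : Color T) with hcoldef
    have hcolmem : ∀ i, col i ∈ CG := fun i => (e.symm i).2
    have hcole : ∀ (a : Color T) (ha : a ∈ CG), col (e ⟨a, ha⟩) = a := by
      intro a ha
      simp [hcoldef]
    have hcolinj : ∀ i j, col i = col j → i = j := by
      intro i j h
      exact e.symm.injective (Subtype.ext h)
    choose pick hp1 hpick using fun i => Finset.mem_image.mp (hcolmem i)
    have hCHmem : ∀ i, col i ∈ CH := fun i => hCC ▸ hcolmem i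
    choose pickH hpH1 hpickH using fun i => Finset.mem_image.mp (hCHmem i)
    have hvmem : mpc G T v ∈ CG := Finset.mem_image_of_mem _ (Finset.mem_univ v)
    have hcntG : ∀ i (u : Fin G.n), mpc G T u = col i →
        ∀ j, Multiset.count (col j) (nbm G T u)
          = Multiset.count (col j) (nbm G T (pick i)) := by
      intro i u hu j
      rw [hnbGG u (pick i) (by rw [hu, hpick i])]
    have hcntH : ∀ i (x : Fin H.n), mpc H T x = col i →
        ∀ j, Multiset.count (col j) (nbm H T x)
          = Multiset.count (col j) (nbm G T (pick i)) := by
      intro i x hx j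
      rw [hnbHG x (pick i) (by rw [hx, hpick i])]
    refine ⟨ℓ, ⟨Matrix.of fun i j => Multiset.count (col j) (nbm G T (pick i)),
      fun i => featOf T (col i), e ⟨mpc G T v, hvmem⟩⟩, ?_, ?_⟩
    · refine ⟨fun i => Finset.univ.filter (fun u => mpc G T u = col i),
        fun i => ⟨pick i, Finset.mem_filter.mpr ⟨Finset.mem_univ _, hpick i⟩⟩,
        ?_, ?_, ?_, ?_, ?_⟩
      · intro i j hij
        refine Finset.disjoint_left.mpr ?_
        intro u hui huj
        exact hij (hcolinj i j
          (by rw [← (Finset.mem_filter.mp hui).2, (Finset.mem_filter.mp huj).2]))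
      · intro u
        refine iff_of_true ?_ (hG.preconnected v u)
        have hm : mpc G T u ∈ CG := Finset.mem_image_of_mem _ (Finset.mem_univ u)
        exact ⟨e ⟨mpc G T u, hm⟩,
          Finset.mem_filter.mpr ⟨Finset.mem_univ _, (hcole _ hm).symm⟩⟩
      · exact Finset.mem_filter.mpr ⟨Finset.mem_univ _, (hcole _ hvmem).symm⟩
      · intro i u hu
        show G.feature u = featOf T (col i)
        rw [← featOf_mpc G T u, (Finset.mem_filter.mp hu).2]
      · intro i j u hu
        have hu2 := (Finset.mem_filter.mp hu).2
        have hflt : ((G.nbrs u).filter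
              (· ∈ Finset.univ.filter (fun x => mpc G T x = col j))).card
            = ((G.nbrs u).filter (fun x => mpc G T x = col j)).card := by
          congr 1
          apply Finset.filter_congr
          intro x _
          simp
        show ((G.nbrs u).filter
            (· ∈ Finset.univ.filter (fun x => mpc G T x = col j))).card
          = Multiset.count (col j) (nbm G T (pick i))
        rw [hflt, count_nbm, hcntG i u hu2 j]
    · refine ⟨fun i => Finset.univ.filter (fun x => mpc H T x = col i),
        fun i => ⟨pickH i, Finset.mem_filter.mpr ⟨Finset.mem_univ _, hpickH i⟩⟩,
        ?_, ?_, ?_, ?_, ?_⟩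
      · intro i j hij
        refine Finset.disjoint_left.mpr ?_
        intro x hxi hxj
        exact hij (hcolinj i j
          (by rw [← (Finset.mem_filter.mp hxi).2, (Finset.mem_filter.mp hxj).2]))
      · intro x
        refine iff_of_true ?_ (hH.preconnected w x)
        have hm : mpc H T x ∈ CG := by
          rw [hCC]
          exact Finset.mem_image_of_mem _ (Finset.mem_univ x)
        exact ⟨e ⟨mpc H T x, hm⟩,
          Finset.mem_filter.mpr ⟨Finset.mem_univ _, (hcole _ hm).symm⟩⟩
      · exact Finset.mem_filter.mpr ⟨Finset.mem_univ _,
          ((hcole _ hvmem).trans hvw).symm⟩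
      · intro i x hx
        show H.feature x = featOf T (col i)
        rw [← featOf_mpc H T x, (Finset.mem_filter.mp hx).2]
      · intro i j x hx
        have hx2 := (Finset.mem_filter.mp hx).2
        have hflt : ((H.nbrs x).filter
              (· ∈ Finset.univ.filter (fun y => mpc H T y = col j))).card
            = ((H.nbrs x).filter (fun y => mpc H T y = col j)).card := by
          congr 1
          apply Finset.filter_congr
          intro y _
          simp
        show ((H.nbrs x).filter
            (· ∈ Finset.univ.filter (fun y => mpc H T y = col j))).card
          = Multiset.count (col j) (nbm G T (pick i))
        rw [hflt, count_nbm, hcntH i x hx2 j]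
end

section
/- Let G and H be featured graphs of the same order n = |G| = |H|, v ∈ V(G), w ∈ V(H). Then mpc^{2n}_G(v) = mpc^{2n}_H(w) if and only if there exists a weak node sketch S that is realised by both (G, v) and (H, w). -/
namespace WSproof

instance colorDecEq : ∀ t, DecidableEq (Color t)
  | 0 => inferInstanceAs (DecidableEq (List Bool))
  | t + 1 =>
      letI := colorDecEq t
      inferInstanceAs (DecidableEq (Color t × Multiset (Color t)))

instance colorInhabited : ∀ t, Inhabited (Color t)
  | 0 => inferInstanceAs (Inhabited (List Bool))
  | t + 1 =>
      letI := colorInhabited t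
      inferInstanceAs (Inhabited (Color t × Multiset (Color t)))

variable (G H : FeaturedGraph)

/-- joint vertex set -/
abbrev U := Fin G.n ⊕ Fin H.n

/-- joint coloring -/
def colU (t : ℕ) : U G H → Color t := Sum.elim (mpc G t) (mpc H t)

/-- joint neighbourhoods -/
def nbrsU : U G H → Finset (U G H)
  | .inl u => (G.nbrs u).map (Function.Embedding.inl)
  | .inr u => (H.nbrs u).map (Function.Embedding.inr)

lemma colU_succ (t : ℕ) (x : U G H) :
    colU G H (t + 1) x
      = ((colU G H t x, (nbrsU G H x).val.map (colU G H t)) : Color t × Multiset (Color t)) := by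
  cases x with
  | inl u =>
      show mpc G (t+1) u = _
      rw [mpc]
      simp [colU, nbrsU, Finset.map_val, Multiset.map_map]
      rfl
  | inr u =>
      show mpc H (t+1) u = _
      rw [mpc]
      simp [colU, nbrsU, Finset.map_val, Multiset.map_map]
      rfl

lemma colU_of_succ {t : ℕ} {x y : U G H} (h : colU G H (t + 1) x = colU G H (t + 1) y) :
    colU G H t x = colU G H t y := by
  have hx := colU_succ G H t x
  have hy := colU_succ G H t y
  rw [hx, hy] at h
  exact congrArg Prod.fst h

lemma colU_of_le {t T : ℕ} (ht : t ≤ T) {x y : U G H} (h : colU G H T x = colU G H T y) :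
    colU G H t x = colU G H t y := by
  induction T with
  | zero => have : t = 0 := Nat.le_zero.mp ht; subst this; exact h
  | succ T ih =>
      rcases Nat.lt_or_ge t (T+1) with h' | h'
      · exact ih (Nat.lt_succ_iff.mp h') (colU_of_succ G H h)
      · have : t = T+1 := le_antisymm ht h'
        subst this; exact h

/-- the stability property at round `t` -/
def Stab (t : ℕ) : Prop :=
  ∀ x y : U G H, colU G H t x = colU G H t y → colU G H (t + 1) x = colU G H (t + 1) y

lemma nbrs_colU_eq {t : ℕ} {x y : U G H} (h : colU G H (t + 1) x = colU G H (t + 1) y) :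
    (nbrsU G H x).val.map (colU G H t) = (nbrsU G H y).val.map (colU G H t) := by
  rw [colU_succ, colU_succ] at h
  exact congrArg Prod.snd h

lemma stab_succ {t : ℕ} (hs : Stab G H t) : Stab G H (t + 1) := by
  classical
  intro x y h
  -- a function sending round-t colors to round-(t+1) colors
  set g : Color t → Color (t + 1) := fun c =>
    if hc : ∃ u : U G H, colU G H t u = c then colU G H (t + 1) hc.choose else default with hg
  have hgc : ∀ u : U G H, colU G H (t + 1) u = g (colU G H t u) := by
    intro u
    have hex : ∃ u' : U G H, colU G H t u' = colU G H t u := ⟨u, rfl⟩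
    have := hex.choose_spec
    rw [hg]
    simp only [dif_pos hex]
    exact (hs _ _ this).symm
  have hn := nbrs_colU_eq G H (hs _ _ (colU_of_succ G H h))
  have hx : (nbrsU G H x).val.map (colU G H (t+1)) = ((nbrsU G H x).val.map (colU G H t)).map g := by
    rw [Multiset.map_map]; exact Multiset.map_congr rfl (fun z _ => hgc z)
  have hy : (nbrsU G H y).val.map (colU G H (t+1)) = ((nbrsU G H y).val.map (colU G H t)).map g := by
    rw [Multiset.map_map]; exact Multiset.map_congr rfl (fun z _ => hgc z)
  rw [colU_succ G H (t+1) x, colU_succ G H (t+1) y]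
  exact Prod.ext h (hx.trans (by rw [hn]; exact hy.symm))

lemma stab_of_le {t T : ℕ} (ht : t ≤ T) (hs : Stab G H t) : Stab G H T := by
  induction T with
  | zero => have : t = 0 := Nat.le_zero.mp ht; subst this; exact hs
  | succ T ih =>
      rcases Nat.lt_or_ge t (T+1) with h' | h'
      · exact stab_succ G H (ih (Nat.lt_succ_iff.mp h'))
      · have : t = T+1 := le_antisymm ht h'
        subst this; exact hs

/-- number of distinct joint colors at round t -/
noncomputable def kcard (t : ℕ) : ℕ :=
  letI := colorDecEq t
  (Finset.univ.image (colU G H t)).card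

lemma kcard_image_eq (t : ℕ) :
    letI := colorDecEq t
    letI := colorDecEq (t+1)
    (Finset.univ.image (colU G H (t+1))).image
      (fun c : Color (t+1) => Prod.fst (α := Color t) (β := Multiset (Color t)) c)
      = Finset.univ.image (colU G H t) := by
  letI := colorDecEq t
  letI := colorDecEq (t+1)
  rw [Finset.image_image]
  refine Finset.image_congr ?_
  intro x _
  show ((colU G H (t+1) x : Color t × Multiset (Color t))).1 = colU G H t x
  rw [colU_succ]

lemma kcard_mono (t : ℕ) : kcard G H t ≤ kcard G H (t + 1) := by
  letI := colorDecEq t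
  letI := colorDecEq (t+1)
  unfold kcard
  rw [← kcard_image_eq G H t]
  exact Finset.card_image_le

lemma kcard_strict {t : ℕ} (h : ¬ Stab G H t) : kcard G H t < kcard G H (t + 1) := by
  letI := colorDecEq t
  letI := colorDecEq (t+1)
  refine lt_of_le_of_ne (kcard_mono G H t) ?_
  intro heq
  unfold kcard at heq
  apply h
  intro x y hxy
  have hinj : Set.InjOn (fun c : Color (t+1) => Prod.fst (α := Color t) (β := Multiset (Color t)) c)
      (Finset.univ.image (colU G H (t+1))) := by
    apply Finset.injOn_of_card_image_eq
    rw [kcard_image_eq G H t]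
    exact heq
  have hx : colU G H (t+1) x ∈ Finset.univ.image (colU G H (t+1)) :=
    Finset.mem_image_of_mem _ (Finset.mem_univ x)
  have hy : colU G H (t+1) y ∈ Finset.univ.image (colU G H (t+1)) :=
    Finset.mem_image_of_mem _ (Finset.mem_univ y)
  refine hinj hx hy ?_
  show ((colU G H (t+1) x : Color t × Multiset (Color t))).1
      = ((colU G H (t+1) y : Color t × Multiset (Color t))).1
  rw [colU_succ, colU_succ]
  exact hxy

lemma kcard_le (t : ℕ) : kcard G H t ≤ G.n + H.n := by
  letI := colorDecEq t
  calc kcard G H t ≤ Finset.univ.card := Finset.card_image_le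
  _ = G.n + H.n := by simp [Finset.card_univ]

lemma kcard_pos (hne : Nonempty (U G H)) (t : ℕ) : 1 ≤ kcard G H t := by
  letI := colorDecEq t
  obtain ⟨x⟩ := hne
  exact Finset.card_pos.mpr ⟨colU G H t x, Finset.mem_image_of_mem _ (Finset.mem_univ x)⟩

lemma stab_final (hne : Nonempty (U G H)) (hn : G.n = H.n) : Stab G H (2 * G.n) := by
  by_contra hP
  have hall : ∀ t ≤ 2 * G.n, ¬ Stab G H t := fun t ht hs => hP (stab_of_le G H ht hs)
  have key : ∀ t ≤ 2 * G.n + 1, t + 1 ≤ kcard G H t := by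
    intro t
    induction t with
    | zero => intro _; exact kcard_pos G H hne 0
    | succ t ih =>
        intro ht
        have h1 : t ≤ 2 * G.n := Nat.lt_succ_iff.mp (Nat.lt_of_succ_le ht)
        have h2 := kcard_strict G H (hall t h1)
        have := ih (le_trans (Nat.le_succ t) ht)
        omega
  have h1 := key (2 * G.n + 1) le_rfl
  have h2 := kcard_le G H (2 * G.n + 1)
  omega

lemma mem_nbrs {G : FeaturedGraph} {a b : Fin G.n} : b ∈ G.nbrs a ↔ G.adj.Adj a b := by
  letI := G.adjDec
  simp [FeaturedGraph.nbrs]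

/-- joint adjacency -/
def adjU : U G H → U G H → Prop := fun x y => y ∈ nbrsU G H x

lemma adjU_inl {a b : Fin G.n} (h : G.adj.Adj a b) :
    adjU G H (.inl a) (.inl b) := by
  show _ ∈ (G.nbrs a).map _
  simp [mem_nbrs]
  exact h

lemma adjU_inr {a b : Fin H.n} (h : H.adj.Adj a b) :
    adjU G H (.inr a) (.inr b) := by
  show _ ∈ (H.nbrs a).map _
  simp [mem_nbrs]
  exact h

lemma reach_inl {a b : Fin G.n} (h : G.adj.Reachable a b) :
    Relation.ReflTransGen (adjU G H) (.inl a) (.inl b) := by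
  rw [SimpleGraph.reachable_iff_reflTransGen] at h
  induction h with
  | refl => exact Relation.ReflTransGen.refl
  | tail _ hbc ih => exact ih.tail (adjU_inl G H hbc)

lemma reach_inr {a b : Fin H.n} (h : H.adj.Reachable a b) :
    Relation.ReflTransGen (adjU G H) (.inr a) (.inr b) := by
  rw [SimpleGraph.reachable_iff_reflTransGen] at h
  induction h with
  | refl => exact Relation.ReflTransGen.refl
  | tail _ hbc ih => exact ih.tail (adjU_inr G H hbc)

lemma reach_of_inl {a : Fin G.n} {x : U G H}
    (h : Relation.ReflTransGen (adjU G H) (.inl a) x) :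
    ∃ b, x = .inl b ∧ G.adj.Reachable a b := by
  induction h with
  | refl => exact ⟨a, rfl, .refl a⟩
  | @tail b c hb hbc ih =>
      obtain ⟨b', rfl, hr⟩ := ih
      have : c ∈ (G.nbrs b').map (Function.Embedding.inl) := hbc
      simp [mem_nbrs] at this
      obtain ⟨c', hadj, rfl⟩ := this
      exact ⟨c', rfl, hr.trans hadj.reachable⟩

lemma reach_of_inr {a : Fin H.n} {x : U G H}
    (h : Relation.ReflTransGen (adjU G H) (.inr a) x) :
    ∃ b, x = .inr b ∧ H.adj.Reachable a b := by
  induction h with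
  | refl => exact ⟨a, rfl, .refl a⟩
  | @tail b c hb hbc ih =>
      obtain ⟨b', rfl, hr⟩ := ih
      have : c ∈ (H.nbrs b').map (Function.Embedding.inr) := hbc
      simp [mem_nbrs] at this
      obtain ⟨c', hadj, rfl⟩ := this
      exact ⟨c', rfl, hr.trans hadj.reachable⟩

lemma partner {T : ℕ} (hs : Stab G H T) {x₀ y₀ : U G H}
    (h : colU G H T x₀ = colU G H T y₀) :
    ∀ x, Relation.ReflTransGen (adjU G H) x₀ x →
      ∃ y, Relation.ReflTransGen (adjU G H) y₀ y ∧ colU G H T x = colU G H T y := by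
  intro x hx
  induction hx with
  | refl => exact ⟨y₀, Relation.ReflTransGen.refl, h⟩
  | @tail b c hb hbc ih =>
      obtain ⟨yb, hy, hcol⟩ := ih
      have hm := nbrs_colU_eq G H (hs _ _ hcol)
      have hc : colU G H T c ∈ (nbrsU G H b).val.map (colU G H T) :=
        Multiset.mem_map_of_mem _ hbc
      rw [hm] at hc
      obtain ⟨y, hy', hcy⟩ := Multiset.mem_map.mp hc
      exact ⟨y, hy.tail hy', hcy.symm⟩

lemma forward (hn : G.n = H.n) (v : Fin G.n) (w : Fin H.n)
    (h : mpc G (2 * G.n) v = mpc H (2 * G.n) w) :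
    ∃ (ℓ : ℕ) (S : WeakSketch ℓ), Realises S G v ∧ Realises S H w := by
  classical
  set T := 2 * G.n with hT
  have hs : Stab G H T := stab_final G H ⟨.inl v⟩ hn
  have hvw : colU G H T (.inl v) = colU G H T (.inr w) := h
  letI := colorDecEq T
  set Rset : Finset (U G H) :=
    Finset.univ.filter (fun x => Relation.ReflTransGen (adjU G H) (.inl v) x) with hRset
  set C : Finset (Color T) := Rset.image (colU G H T) with hC
  have mem_C_iff : ∀ c, c ∈ C ↔ ∃ u, G.adj.Reachable v u ∧ colU G H T (.inl u) = c := by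
    intro c
    rw [hC, Finset.mem_image]
    constructor
    · rintro ⟨x, hx, rfl⟩
      rw [hRset, Finset.mem_filter] at hx
      obtain ⟨b, rfl, hr⟩ := reach_of_inl G H hx.2
      exact ⟨b, hr, rfl⟩
    · rintro ⟨u, hr, rfl⟩
      refine ⟨.inl u, ?_, rfl⟩
      rw [hRset, Finset.mem_filter]
      exact ⟨Finset.mem_univ _, reach_inl G H hr⟩
  set e : Fin C.card ≃ {c // c ∈ C} := C.equivFin.symm with he
  set cc : Fin C.card → Color T := fun i => (e i : Color T) with hcc
  have cc_inj : Function.Injective cc := fun i j hij =>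
    e.injective (Subtype.ext hij)
  have cc_mem : ∀ i, cc i ∈ C := fun i => (e i).2
  choose rep hrep1 hrep2 using (fun i => (mem_C_iff (cc i)).mp (cc_mem i))
  have hvC : colU G H T (.inl v) ∈ C := (mem_C_iff _).mpr ⟨v, .refl v, rfl⟩
  set k : Fin C.card := e.symm ⟨colU G H T (.inl v), hvC⟩ with hk
  have hck : cc k = colU G H T (.inl v) := by
    rw [hcc, hk]; simp
  set A : Matrix (Fin C.card) (Fin C.card) ℕ :=
    fun i j => ((nbrsU G H (.inl (rep i))).val.map (colU G H T)).count (cc j) with hA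
  set cvec : Fin C.card → List Bool := fun i => (colU G H 0 (.inl (rep i)) : List Bool) with hcvec
  refine ⟨C.card, ⟨A, cvec, k⟩, ?_, ?_⟩
  · -- Realises in G
    set V : Fin C.card → Finset (Fin G.n) :=
      fun i => Finset.univ.filter (fun u => G.adj.Reachable v u ∧ colU G H T (.inl u) = cc i)
        with hV
    have memV : ∀ i u, u ∈ V i ↔ G.adj.Reachable v u ∧ colU G H T (.inl u) = cc i := by
      intro i u; rw [hV]; simp
    refine ⟨V, ?_, ?_, ?_, ?_, ?_, ?_⟩
    · exact fun i => ⟨rep i, (memV i _).mpr ⟨hrep1 i, hrep2 i⟩⟩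
    · intro i j hij
      rw [Finset.disjoint_left]
      intro u hu hu'
      exact hij (cc_inj (((memV i u).mp hu).2.symm.trans ((memV j u).mp hu').2))
    · intro u
      constructor
      · rintro ⟨i, hi⟩; exact ((memV i u).mp hi).1
      · intro hr
        have hmem : colU G H T (.inl u) ∈ C := (mem_C_iff _).mpr ⟨u, hr, rfl⟩
        refine ⟨e.symm ⟨_, hmem⟩, (memV _ u).mpr ⟨hr, ?_⟩⟩
        rw [hcc]; simp
    · exact (memV k v).mpr ⟨.refl v, hck.symm⟩
    · intro i u hu
      have h0 : colU G H 0 (.inl u) = colU G H 0 (.inl (rep i)) :=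
        colU_of_le G H (Nat.zero_le T)
          (((memV i u).mp hu).2.trans (hrep2 i).symm)
      exact h0
    · intro i j u hu
      have hcu : colU G H T (.inl u) = colU G H T (.inl (rep i)) :=
        ((memV i u).mp hu).2.trans (hrep2 i).symm
      have hm := nbrs_colU_eq G H (hs _ _ hcu)
      have hnb : (nbrsU G H (.inl u)).val.map (colU G H T)
          = (G.nbrs u).val.map (fun b => colU G H T (.inl b)) := by
        show ((G.nbrs u).map (Function.Embedding.inl)).val.map _ = _
        rw [Finset.map_val, Multiset.map_map]
        rfl
      have hreach : G.adj.Reachable v u := ((memV i u).mp hu).1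
      show ((G.nbrs u).filter (· ∈ V j)).card
          = Multiset.count (cc j) ((nbrsU G H (.inl (rep i))).val.map (colU G H T))
      rw [← hm, hnb, Multiset.count_map]
      show Multiset.card ((G.nbrs u).filter (· ∈ V j)).val = _
      rw [Finset.filter_val]
      congr 1
      apply Multiset.filter_congr
      intro b hb
      have hrb : G.adj.Reachable v b := hreach.trans (mem_nbrs.mp hb).reachable
      rw [memV j b]
      constructor
      · rintro ⟨_, h2⟩; exact h2.symm
      · intro h2; exact ⟨hrb, h2.symm⟩
  · -- Realises in H
    set V : Fin C.card → Finset (Fin H.n) :=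
      fun i => Finset.univ.filter (fun u => H.adj.Reachable w u ∧ colU G H T (.inr u) = cc i)
        with hV
    have memV : ∀ i u, u ∈ V i ↔ H.adj.Reachable w u ∧ colU G H T (.inr u) = cc i := by
      intro i u; rw [hV]; simp
    refine ⟨V, ?_, ?_, ?_, ?_, ?_, ?_⟩
    · intro i
      obtain ⟨y, hy, hcol⟩ := partner G H hs hvw (.inl (rep i)) (reach_inl G H (hrep1 i))
      obtain ⟨b, rfl, hrb⟩ := reach_of_inr G H hy
      exact ⟨b, (memV i b).mpr ⟨hrb, hcol.symm.trans (hrep2 i)⟩⟩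
    · intro i j hij
      rw [Finset.disjoint_left]
      intro u hu hu'
      exact hij (cc_inj (((memV i u).mp hu).2.symm.trans ((memV j u).mp hu').2))
    · intro u
      constructor
      · rintro ⟨i, hi⟩; exact ((memV i u).mp hi).1
      · intro hr
        obtain ⟨y, hy, hcol⟩ := partner G H hs hvw.symm (.inr u) (reach_inr G H hr)
        obtain ⟨b, rfl, hrb⟩ := reach_of_inl G H hy
        have hmem : colU G H T (.inr u) ∈ C := (mem_C_iff _).mpr ⟨b, hrb, hcol.symm⟩
        refine ⟨e.symm ⟨_, hmem⟩, (memV _ u).mpr ⟨hr, ?_⟩⟩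
        rw [hcc]; simp
    · exact (memV k w).mpr ⟨.refl w, (hck.trans hvw).symm⟩
    · intro i u hu
      have h0 : colU G H 0 (.inr u) = colU G H 0 (.inl (rep i)) :=
        colU_of_le G H (Nat.zero_le T)
          (((memV i u).mp hu).2.trans (hrep2 i).symm)
      exact h0
    · intro i j u hu
      have hcu : colU G H T (.inr u) = colU G H T (.inl (rep i)) :=
        ((memV i u).mp hu).2.trans (hrep2 i).symm
      have hm := nbrs_colU_eq G H (hs _ _ hcu)
      have hnb : (nbrsU G H (.inr u)).val.map (colU G H T)
          = (H.nbrs u).val.map (fun b => colU G H T (.inr b)) := by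
        show ((H.nbrs u).map (Function.Embedding.inr)).val.map _ = _
        rw [Finset.map_val, Multiset.map_map]
        rfl
      have hreach : H.adj.Reachable w u := ((memV i u).mp hu).1
      show ((H.nbrs u).filter (· ∈ V j)).card
          = Multiset.count (cc j) ((nbrsU G H (.inl (rep i))).val.map (colU G H T))
      rw [← hm, hnb, Multiset.count_map]
      show Multiset.card ((H.nbrs u).filter (· ∈ V j)).val = _
      rw [Finset.filter_val]
      congr 1
      apply Multiset.filter_congr
      intro b hb
      have hrb : H.adj.Reachable w b := hreach.trans (mem_nbrs.mp hb).reachable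
      rw [memV j b]
      constructor
      · rintro ⟨_, h2⟩; exact h2.symm
      · intro h2; exact ⟨hrb, h2.symm⟩

/-- The color that every vertex of class `i` must have after `t` rounds, computed from `S`. -/
def sketchColor {ℓ : ℕ} (S : WeakSketch ℓ) : (t : ℕ) → Fin ℓ → Color t
  | 0, i => (S.c i : List Bool)
  | t + 1, i =>
      ((sketchColor S t i, ∑ j, (S.A i j) • ({sketchColor S t j} : Multiset (Color t)))
        : Color t × Multiset (Color t))

lemma sum_singleton_map {α β : Type*} (s : Finset α) (f : α → β) :
    (∑ x ∈ s, ({f x} : Multiset β)) = s.val.map f := by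
  show (s.val.map (fun x => ({f x} : Multiset β))).sum = s.val.map f
  have : (fun x => ({f x} : Multiset β)) = (fun a => ({a} : Multiset β)) ∘ f := rfl
  rw [this, ← Multiset.map_map, Multiset.sum_map_singleton]

lemma realises_mpc {ℓ : ℕ} (S : WeakSketch ℓ) (G : FeaturedGraph) (v : Fin G.n)
    (hR : Realises S G v) : ∀ t, mpc G t v = sketchColor S t S.k := by
  classical
  obtain ⟨V, hne, hdis, hcov, hvk, hfeat, hcount⟩ := hR
  suffices hmain : ∀ t i, ∀ u ∈ V i, mpc G t u = sketchColor S t i from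
    fun t => hmain t S.k v hvk
  intro t
  induction t with
  | zero =>
      intro i u hu
      show (G.feature u : List Bool) = (S.c i : List Bool)
      exact hfeat i u hu
  | succ t ih =>
      intro i u hu
      have hru : G.adj.Reachable v u := (hcov u).mp ⟨i, hu⟩
      have hmem : ∀ x ∈ G.nbrs u, ∃ j, x ∈ V j := fun x hx =>
        (hcov x).mpr (hru.trans (mem_nbrs.mp hx).reachable)
      set ix : Fin G.n → Fin ℓ := fun x => if h : ∃ j, x ∈ V j then h.choose else i with hix
      have hixmem : ∀ x, (∃ j, x ∈ V j) → x ∈ V (ix x) := by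
        intro x hx
        rw [hix]; simp only [dif_pos hx]; exact hx.choose_spec
      have hixeq : ∀ x j, x ∈ V j → ix x = j := by
        intro x j hxj
        by_contra hne'
        exact (Finset.disjoint_left.mp (hdis _ _ hne') (hixmem x ⟨j, hxj⟩)) hxj
      have hsnd : (G.nbrs u).val.map (mpc G t)
          = ∑ j, (S.A i j) • ({sketchColor S t j} : Multiset (Color t)) := by
        have hmap : (G.nbrs u).val.map (mpc G t)
            = (G.nbrs u).val.map (fun x => sketchColor S t (ix x)) := by
          refine Multiset.map_congr rfl (fun x hx => ?_)
          obtain ⟨j, hj⟩ := hmem x hx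
          rw [hixeq x j hj]
          exact ih j x hj
        rw [hmap, ← sum_singleton_map, ← Finset.sum_fiberwise (G.nbrs u) ix
          (fun x => ({sketchColor S t (ix x)} : Multiset (Color t)))]
        refine Finset.sum_congr rfl (fun j _ => ?_)
        have h1 : ∑ x ∈ (G.nbrs u).filter (fun x => ix x = j),
            ({sketchColor S t (ix x)} : Multiset (Color t))
            = ∑ _x ∈ (G.nbrs u).filter (fun x => ix x = j),
              ({sketchColor S t j} : Multiset (Color t)) := by
          refine Finset.sum_congr rfl (fun x hx => ?_)
          rw [(Finset.mem_filter.mp hx).2]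
        rw [h1, Finset.sum_const]
        congr 1
        have h2 : (G.nbrs u).filter (fun x => ix x = j) = (G.nbrs u).filter (· ∈ V j) := by
          refine Finset.filter_congr (fun x hx => ?_)
          constructor
          · rintro rfl; exact hixmem x (hmem x hx)
          · exact hixeq x j
        rw [h2]
        exact hcount i j u hu
      have h1 : mpc G (t+1) u
          = ((mpc G t u, (G.nbrs u).val.map (mpc G t)) : Color t × Multiset (Color t)) := by
        rw [mpc]
      have h2 : sketchColor S (t+1) i
          = ((sketchColor S t i, ∑ j, (S.A i j) • ({sketchColor S t j} : Multiset (Color t)))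
            : Color t × Multiset (Color t)) := by
        rw [sketchColor]
      rw [h1, h2]
      exact Prod.ext (ih i u hu) hsnd

end WSproof

/-- For featured graphs of the same order `n`, the round-`2n` colors of two
rooted nodes agree iff some weak node sketch is realised by both. -/
theorem weak_sketch_iff_final_color (G H : FeaturedGraph) (hn : G.n = H.n)
    (v : Fin G.n) (w : Fin H.n) :
    mpc G (2 * G.n) v = mpc H (2 * G.n) w ↔
      ∃ (ℓ : ℕ) (S : WeakSketch ℓ), Realises S G v ∧ Realises S H w := by
  constructor
  · exact fun h => WSproof.forward G H hn v w h
  · rintro ⟨ℓ, S, hG, hH⟩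
    exact (WSproof.realises_mpc S G v hG (2 * G.n)).trans
      (WSproof.realises_mpc S H w hH (2 * G.n)).symm
end

section
/- Fix a binary string b₀ and an integer L ≥ 1. Let P be the featured graph that is the path with vertices 0, 1, …, 2L (edges between i and i+1), all of whose node features equal b₀, and let w = L be its middle vertex. Let C be the featured graph that is a cycle of length m ≥ 2L+1, all of whose node features equal b₀, and let v be any vertex of C. Then for every t with 0 ≤ t ≤ L: mpc^t_P(w) = mpc^t_C(v). -/
/-- Adjacency of a cycle of length `m` on `{0, …, m-1}`. -/
def cycRel (m a b : ℕ) : Prop := a ≠ b ∧ ((a + 1) % m = b ∨ (b + 1) % m = a)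

instance (m a b : ℕ) : Decidable (cycRel m a b) := by unfold cycRel; infer_instance

/-- The featured graph that is a cycle of length `m`, all of whose features are `b₀`. -/
def cycleFG (m : ℕ) (b₀ : List Bool) : FeaturedGraph where
  n := m
  adj :=
    { Adj := fun i j => cycRel m i j
      symm := ⟨fun i j h => ⟨h.1.symm, h.2.symm⟩⟩
      loopless := ⟨fun i h => h.1 rfl⟩ }
  adjDec := fun i j => inferInstanceAs (Decidable (cycRel m i j))
  feature := fun _ => b₀

/-- The featured graph that is a path with vertices `0, 1, …, 2L`
(edges between `i` and `i+1`), all of whose features are `b₀`. -/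
def pathFG (L : ℕ) (b₀ : List Bool) : FeaturedGraph where
  n := 2 * L + 1
  adj :=
    { Adj := fun i j => (i : ℕ) + 1 = j ∨ (j : ℕ) + 1 = i
      symm := ⟨fun i j h => h.symm⟩
      loopless := ⟨fun i h => by rcases h with h | h <;> omega⟩ }
  adjDec := fun i j => by exact inferInstanceAs (Decidable (_ ∨ _))
  feature := fun _ => b₀

lemma mod_succ_eq {a m : ℕ} (h : a < m) :
    (a + 1) % m = if a + 1 = m then 0 else a + 1 := by
  split
  · simp [*, Nat.mod_self]
  · exact Nat.mod_eq_of_lt (by omega)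

lemma mod_pred_eq {a m : ℕ} (h : a < m) :
    (a + m - 1) % m = if a = 0 then m - 1 else a - 1 := by
  split
  · subst ‹a = 0›; rw [show 0 + m - 1 = m - 1 from by omega]
    exact Nat.mod_eq_of_lt (by omega)
  · rw [show a + m - 1 = (a - 1) + m by omega, Nat.add_mod_right]
    exact Nat.mod_eq_of_lt (by omega)

lemma cyc_nbrs (b₀ : List Bool) {m : ℕ} (hm : 3 ≤ m) (v : Fin (cycleFG m b₀).n) :
    (cycleFG m b₀).nbrs v =
      { ⟨((v : ℕ) + 1) % m, Nat.mod_lt _ (by omega)⟩,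
        ⟨((v : ℕ) + m - 1) % m, Nat.mod_lt _ (by omega)⟩ } := by
  ext w
  have hv : (v : ℕ) < m := v.isLt
  have hw : (w : ℕ) < m := w.isLt
  simp only [FeaturedGraph.nbrs, Finset.mem_filter, Finset.mem_univ, true_and,
    Finset.mem_insert, Finset.mem_singleton, Fin.ext_iff, Fin.val_mk]
  show cycRel m (v : ℕ) (w : ℕ) ↔ _
  unfold cycRel
  rw [mod_succ_eq hv, mod_succ_eq hw, mod_pred_eq hv]
  constructor
  · rintro ⟨h1, h2⟩
    rcases h2 with h2 | h2 <;> split_ifs at h2 ⊢ <;> omega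
  · intro h
    refine ⟨?_, ?_⟩ <;> split_ifs at h ⊢ <;> omega

lemma path_nbrs (b₀ : List Bool) (L i : ℕ) (h1 : 1 ≤ i) (h2 : i + 1 ≤ 2 * L) :
    (pathFG L b₀).nbrs ⟨i, by show i < 2 * L + 1; omega⟩ =
      { (⟨i - 1, by show i - 1 < 2 * L + 1; omega⟩ : Fin (pathFG L b₀).n),
        ⟨i + 1, by show i + 1 < 2 * L + 1; omega⟩ } := by
  ext w
  simp only [FeaturedGraph.nbrs, Finset.mem_filter, Finset.mem_univ, true_and,
    Finset.mem_insert, Finset.mem_singleton, Fin.ext_iff, Fin.val_mk]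
  show (i + 1 = (w : ℕ) ∨ (w : ℕ) + 1 = i) ↔ _
  omega

lemma pair_val {α : Type*} [DecidableEq α] {a b : α} (h : a ≠ b) :
    ({a, b} : Finset α).val = {a, b} := by
  rw [Finset.insert_val_of_notMem (by simp [h])]; rfl

lemma cyc_const (b₀ : List Bool) {m : ℕ} (hm : 3 ≤ m) :
    ∀ t (v w : Fin (cycleFG m b₀).n), mpc (cycleFG m b₀) t v = mpc (cycleFG m b₀) t w := by
  intro t
  induction t with
  | zero => intro v w; rfl
  | succ t ih =>
    intro v w
    show (_, _) = (_, _)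
    have key : ∀ u : Fin (cycleFG m b₀).n,
        ((cycleFG m b₀).nbrs u).val.map (mpc (cycleFG m b₀) t)
          = {mpc (cycleFG m b₀) t v, mpc (cycleFG m b₀) t v} := by
      intro u
      have hu : (u : ℕ) < m := u.isLt
      have hne : (⟨((u : ℕ) + 1) % m, Nat.mod_lt _ (by omega)⟩ : Fin (cycleFG m b₀).n)
          ≠ ⟨((u : ℕ) + m - 1) % m, Nat.mod_lt _ (by omega)⟩ := by
        simp only [Fin.ext_iff, ne_eq, Fin.val_mk]
        rw [mod_succ_eq hu, mod_pred_eq hu]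
        split_ifs <;> omega
      rw [cyc_nbrs b₀ hm u, pair_val hne]
      simp only [Multiset.insert_eq_cons, Multiset.map_cons, Multiset.map_singleton]
      rw [show mpc (cycleFG m b₀) t ⟨((u : ℕ) + 1) % m, Nat.mod_lt _ (by omega)⟩
            = mpc (cycleFG m b₀) t v from ih _ v,
          show mpc (cycleFG m b₀) t ⟨((u : ℕ) + m - 1) % m, Nat.mod_lt _ (by omega)⟩
            = mpc (cycleFG m b₀) t v from ih _ v]
    rw [key v, key w, ih v w]

lemma path_middle (b₀ : List Bool) (L : ℕ) (m : ℕ) (hm : 2 * L + 1 ≤ m) (hL : 1 ≤ L)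
    (v : Fin (cycleFG m b₀).n) :
    ∀ t i (hi : i < 2 * L + 1), t ≤ i → i + t ≤ 2 * L →
      mpc (pathFG L b₀) t ⟨i, hi⟩ = mpc (cycleFG m b₀) t v := by
  have hm3 : 3 ≤ m := by omega
  intro t
  induction t with
  | zero => intro i hi _ _; rfl
  | succ t ih =>
    intro i hi h1 h2
    show (_, _) = (_, _)
    have hi1 : 1 ≤ i := by omega
    have hi2 : i + 1 ≤ 2 * L := by omega
    rw [path_nbrs b₀ L i hi1 hi2,
      pair_val (by simp only [Fin.ext_iff, ne_eq]; omega)]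
    simp only [Multiset.insert_eq_cons, Multiset.map_cons, Multiset.map_singleton]
    rw [ih (i - 1) (by omega) (by omega) (by omega),
        ih (i + 1) (by omega) (by omega) (by omega),
        ih i hi (by omega) (by omega)]
    -- now the cycle side
    have hv : (v : ℕ) < m := v.isLt
    have hne : (⟨((v : ℕ) + 1) % m, Nat.mod_lt _ (by omega)⟩ : Fin (cycleFG m b₀).n)
        ≠ ⟨((v : ℕ) + m - 1) % m, Nat.mod_lt _ (by omega)⟩ := by
      simp only [Fin.ext_iff, ne_eq, Fin.val_mk]
      rw [mod_succ_eq hv, mod_pred_eq hv]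
      split_ifs <;> omega
    rw [cyc_nbrs b₀ hm3 v, pair_val hne]
    simp only [Multiset.insert_eq_cons, Multiset.map_cons, Multiset.map_singleton]
    rw [show mpc (cycleFG m b₀) t ⟨((v : ℕ) + 1) % m, Nat.mod_lt _ (by omega)⟩
          = mpc (cycleFG m b₀) t v from cyc_const b₀ hm3 t _ v,
        show mpc (cycleFG m b₀) t ⟨((v : ℕ) + m - 1) % m, Nat.mod_lt _ (by omega)⟩
          = mpc (cycleFG m b₀) t v from cyc_const b₀ hm3 t _ v]

/-- For `t ≤ L`, the middle vertex of a uniformly-featured path with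
vertices `0,…,2L` has the same round-`t` color as any vertex of a uniformly-featured cycle
of length `m ≥ 2L+1`. -/
theorem mpc_path_middle_eq_cycle (b₀ : List Bool) (L : ℕ) (hL : 1 ≤ L)
    (m : ℕ) (hm : 2 * L + 1 ≤ m) (v : Fin (cycleFG m b₀).n)
    (t : ℕ) (ht : t ≤ L) :
    mpc (pathFG L b₀) t ⟨L, by show L < 2 * L + 1; omega⟩ = mpc (cycleFG m b₀) t v :=
  path_middle b₀ L m hm hL v t L (by omega) ht (by omega)
end

section
/- For every rational number a ≥ 0 there exist d ∈ ℕ and a ReLU MLP F : ℚ^d → ℚ^d such that for all natural numbers x₁, x₂, the sequence of iterates F^t(x₀) starting from the initial vector x₀ = (1, 0, x₁, x₂, 0, …, 0) ∈ ℚ^d is eventually constant, and its eventual value has first coordinate equal to 0 and fifth coordinate equal to a·x₁·x₂³. -/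
def relu (x : ℚ) : ℚ := max x 0

/-- `IsMLP f` says `f` is computed by a ReLU MLP with rational weights. -/
inductive IsMLP : {din dout : ℕ} → ((Fin din → ℚ) → (Fin dout → ℚ)) → Prop
  | base {din dout : ℕ} (W : Matrix (Fin dout) (Fin din) ℚ) (b : Fin dout → ℚ) :
      IsMLP (fun x i => relu ((∑ j, W i j * x j) + b i))
  | step {din dmid dout : ℕ} {g : (Fin din → ℚ) → (Fin dmid → ℚ)} (hg : IsMLP g)
      (W : Matrix (Fin dout) (Fin dmid) ℚ) (b : Fin dout → ℚ) :
      IsMLP (fun x i => relu ((∑ j, W i j * g x j) + b i))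

/-- A ReLU MLP, packaged with the function it computes. -/
structure MLP (din dout : ℕ) where
  eval : (Fin din → ℚ) → (Fin dout → ℚ)
  isMLP : IsMLP eval

/-- Rational binary encoding of a binary string. -/
def rbe : List Bool → ℚ
  | [] => 0
  | b :: t => ((if b then 1 else 0) + rbe t) / 2

/-- Rational quaternary encoding of a binary string. -/
def rqe : List Bool → ℚ
  | [] => 0
  | b :: t => ((if b then (3 : ℚ) else 1) + rqe t) / 4

/-- The vector in `ℚ^d` whose first coordinates are the listed values, padded with zeros. -/
def initVec (d : ℕ) (vals : List ℚ) : Fin d → ℚ := fun i => vals.getD (i : ℕ) 0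


lemma relu_of_nonneg {x : ℚ} (h : 0 ≤ x) : relu x = x := max_eq_left h
lemma relu_nonneg (x : ℚ) : 0 ≤ relu x := le_max_right x 0
lemma relu_relu (x : ℚ) : relu (relu x) = relu x := relu_of_nonneg (relu_nonneg x)

def gv {n : ℕ} (x : Fin n → ℚ) (k : ℕ) : ℚ := if h : k < n then x ⟨k, h⟩ else 0

lemma gv_nonneg {n : ℕ} {x : Fin n → ℚ} (hx : ∀ i, 0 ≤ x i) (k : ℕ) : 0 ≤ gv x k := by
  unfold gv; split
  · exact hx _
  · exact le_refl 0

def w1 : ℕ → ℕ → ℚ := fun i j =>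
  if i = 0 then (if j = 2 then (1) else 0) else
  if i = 1 then (if j = 3 then (1) else 0) else
  if i = 2 then (if j = 5 then (1) else 0) else
  if i = 3 then (if j = 6 then (1) else 0) else
  if i = 4 then (if j = 7 then (1) else 0) else
  if i = 5 then (if j = 8 then (1) else 0) else
  if i = 6 then (if j = 9 then (1) else 0) else
  if i = 7 then (if j = 10 then (1) else 0) else
  if i = 8 then (if j = 11 then (1) else 0) else
  if i = 9 then (if j = 12 then (1) else 0) else
  if i = 10 then (if j = 13 then (1) else 0) else
  if i = 11 then (if j = 14 then (1) else 0) else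
  if i = 12 then (if j = 15 then (1) else 0) else
  if i = 13 then (if j = 5 then (1) else if j = 2 then (-1) else if j = 3 then (-3) else 0) else
  if i = 14 then (if j = 2 then (1) else if j = 3 then (1) else if j = 5 then (-1) else 0) else
  if i = 15 then (if j = 2 then (1) else if j = 5 then (-1) else 0) else
  if i = 16 then (if j = 3 then (1) else if j = 5 then (-1) else 0) else
  if i = 17 then (if j = 9 then (1) else if j = 3 then (-1) else 0) else
  if i = 18 then (if j = 10 then (1) else if j = 11 then (-1) else 0) else
  if i = 19 then (if j = 13 then (1) else if j = 14 then (-1) else 0) else 0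

def b1 : ℕ → ℚ := fun i => if i = 13 then (1) else if i = 17 then (1) else 0

def w2 (a : ℚ) : ℕ → ℕ → ℚ := fun i j =>
  if i = 0 then (if j = 0 then (1) else 0) else
  if i = 1 then (if j = 1 then (1) else 0) else
  if i = 2 then (if j = 2 then (1) else if j = 13 then (-1) else 0) else
  if i = 3 then (if j = 3 then (1) else if j = 14 then (1) else 0) else
  if i = 4 then (if j = 4 then (1) else if j = 15 then (1) else 0) else
  if i = 5 then (if j = 5 then (1) else if j = 16 then (1) else 0) else
  if i = 6 then (if j = 6 then (1) else if j = 17 then (-1) else 0) else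
  if i = 7 then (if j = 9 then (a) else if j = 12 then (-a) else 0) else
  if i = 8 then (if j = 7 then (1) else if j = 14 then (1) else if j = 15 then (-1) else if j = 16 then (1) else if j = 17 then (1) else if j = 13 then (-1) else 0) else
  if i = 9 then (if j = 8 then (1) else if j = 14 then (1) else if j = 15 then (-1) else if j = 16 then (1) else if j = 17 then (1) else if j = 13 then (-2) else 0) else
  if i = 10 then (if j = 9 then (1) else if j = 18 then (1) else 0) else
  if i = 11 then (if j = 12 then (1) else if j = 19 then (1) else 0) else
  if i = 12 then (if j = 3 then (1) else if j = 4 then (-1) else if j = 5 then (-3) else if j = 6 then (1) else 0) else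
  if i = 13 then (if j = 3 then (-1) else if j = 4 then (1) else if j = 5 then (3) else if j = 6 then (-1) else 0) else
  if i = 14 then (if j = 3 then (1) else if j = 14 then (1) else if j = 4 then (-1) else if j = 15 then (-1) else if j = 5 then (-3) else if j = 16 then (-3) else if j = 6 then (1) else if j = 17 then (-1) else 0) else
  if i = 15 then (if j = 3 then (-1) else if j = 14 then (-1) else if j = 4 then (1) else if j = 15 then (1) else if j = 5 then (3) else if j = 16 then (3) else if j = 6 then (-1) else if j = 17 then (1) else 0) else
  if i = 16 then (if j = 10 then (1) else 0) else
  if i = 17 then (if j = 11 then (1) else 0) else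
  if i = 18 then (if j = 13 then (1) else 0) else 0

def b2 : ℕ → ℚ := fun i => if i = 2 then (1) else if i = 6 then (1) else if i = 8 then (-1) else if i = 9 then (-1) else if i = 14 then (1) else if i = 15 then (-1) else 0

def w3 : ℕ → ℕ → ℚ := fun i j =>
  if i = 0 then (0:ℚ) else
  if i = 1 then (0:ℚ) else
  if i = 2 then (if j = 0 then (1) else 0) else
  if i = 3 then (if j = 1 then (1) else 0) else
  if i = 4 then (if j = 7 then (1) else 0) else
  if i = 5 then (if j = 2 then (1) else 0) else
  if i = 6 then (if j = 3 then (1) else 0) else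
  if i = 7 then (if j = 4 then (1) else 0) else
  if i = 8 then (if j = 5 then (1) else 0) else
  if i = 9 then (if j = 6 then (1) else 0) else
  if i = 10 then (if j = 8 then (1) else 0) else
  if i = 11 then (if j = 9 then (1) else 0) else
  if i = 12 then (if j = 10 then (1) else 0) else
  if i = 13 then (if j = 16 then (1) else if j = 14 then (1) else if j = 15 then (1) else if j = 12 then (-1) else if j = 13 then (-1) else if j = 18 then (-1) else 0) else
  if i = 14 then (if j = 17 then (1) else if j = 14 then (1) else if j = 15 then (1) else if j = 12 then (-1) else if j = 13 then (-1) else if j = 18 then (-2) else 0) else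
  if i = 15 then (if j = 11 then (1) else 0) else 0

def b3 : ℕ → ℚ := fun i => 0

def V1 (x : Fin 16 → ℚ) (k : ℕ) : ℚ :=
  if k = 0 then relu ((1) * gv x 2) else
  if k = 1 then relu ((1) * gv x 3) else
  if k = 2 then relu ((1) * gv x 5) else
  if k = 3 then relu ((1) * gv x 6) else
  if k = 4 then relu ((1) * gv x 7) else
  if k = 5 then relu ((1) * gv x 8) else
  if k = 6 then relu ((1) * gv x 9) else
  if k = 7 then relu ((1) * gv x 10) else
  if k = 8 then relu ((1) * gv x 11) else
  if k = 9 then relu ((1) * gv x 12) else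
  if k = 10 then relu ((1) * gv x 13) else
  if k = 11 then relu ((1) * gv x 14) else
  if k = 12 then relu ((1) * gv x 15) else
  if k = 13 then relu ((1) * gv x 5 + (-1) * gv x 2 + (-3) * gv x 3 + (1)) else
  if k = 14 then relu ((1) * gv x 2 + (1) * gv x 3 + (-1) * gv x 5) else
  if k = 15 then relu ((1) * gv x 2 + (-1) * gv x 5) else
  if k = 16 then relu ((1) * gv x 3 + (-1) * gv x 5) else
  if k = 17 then relu ((1) * gv x 9 + (-1) * gv x 3 + (1)) else
  if k = 18 then relu ((1) * gv x 10 + (-1) * gv x 11) else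
  if k = 19 then relu ((1) * gv x 13 + (-1) * gv x 14) else 0

def V2 (a : ℚ) (x : Fin 16 → ℚ) (k : ℕ) : ℚ :=
  if k = 0 then relu ((1) * V1 x 0) else
  if k = 1 then relu ((1) * V1 x 1) else
  if k = 2 then relu ((1) * V1 x 2 + (-1) * V1 x 13 + (1)) else
  if k = 3 then relu ((1) * V1 x 3 + (1) * V1 x 14) else
  if k = 4 then relu ((1) * V1 x 4 + (1) * V1 x 15) else
  if k = 5 then relu ((1) * V1 x 5 + (1) * V1 x 16) else
  if k = 6 then relu ((1) * V1 x 6 + (-1) * V1 x 17 + (1)) else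
  if k = 7 then relu ((a) * V1 x 9 + (-a) * V1 x 12) else
  if k = 8 then relu ((1) * V1 x 7 + (1) * V1 x 14 + (-1) * V1 x 15 + (1) * V1 x 16 + (1) * V1 x 17 + (-1) * V1 x 13 + (-1)) else
  if k = 9 then relu ((1) * V1 x 8 + (1) * V1 x 14 + (-1) * V1 x 15 + (1) * V1 x 16 + (1) * V1 x 17 + (-2) * V1 x 13 + (-1)) else
  if k = 10 then relu ((1) * V1 x 9 + (1) * V1 x 18) else
  if k = 11 then relu ((1) * V1 x 12 + (1) * V1 x 19) else
  if k = 12 then relu ((1) * V1 x 3 + (-1) * V1 x 4 + (-3) * V1 x 5 + (1) * V1 x 6) else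
  if k = 13 then relu ((-1) * V1 x 3 + (1) * V1 x 4 + (3) * V1 x 5 + (-1) * V1 x 6) else
  if k = 14 then relu ((1) * V1 x 3 + (1) * V1 x 14 + (-1) * V1 x 4 + (-1) * V1 x 15 + (-3) * V1 x 5 + (-3) * V1 x 16 + (1) * V1 x 6 + (-1) * V1 x 17 + (1)) else
  if k = 15 then relu ((-1) * V1 x 3 + (-1) * V1 x 14 + (1) * V1 x 4 + (1) * V1 x 15 + (3) * V1 x 5 + (3) * V1 x 16 + (-1) * V1 x 6 + (1) * V1 x 17 + (-1)) else
  if k = 16 then relu ((1) * V1 x 10) else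
  if k = 17 then relu ((1) * V1 x 11) else
  if k = 18 then relu ((1) * V1 x 13) else 0

def Phi (a : ℚ) (x : Fin 16 → ℚ) (k : ℕ) : ℚ :=
  if k = 0 then relu ((0)) else
  if k = 1 then relu ((0)) else
  if k = 2 then relu ((1) * V2 a x 0) else
  if k = 3 then relu ((1) * V2 a x 1) else
  if k = 4 then relu ((1) * V2 a x 7) else
  if k = 5 then relu ((1) * V2 a x 2) else
  if k = 6 then relu ((1) * V2 a x 3) else
  if k = 7 then relu ((1) * V2 a x 4) else
  if k = 8 then relu ((1) * V2 a x 5) else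
  if k = 9 then relu ((1) * V2 a x 6) else
  if k = 10 then relu ((1) * V2 a x 8) else
  if k = 11 then relu ((1) * V2 a x 9) else
  if k = 12 then relu ((1) * V2 a x 10) else
  if k = 13 then relu ((1) * V2 a x 16 + (1) * V2 a x 14 + (1) * V2 a x 15 + (-1) * V2 a x 12 + (-1) * V2 a x 13 + (-1) * V2 a x 18) else
  if k = 14 then relu ((1) * V2 a x 17 + (1) * V2 a x 14 + (1) * V2 a x 15 + (-1) * V2 a x 12 + (-1) * V2 a x 13 + (-2) * V2 a x 18) else
  if k = 15 then relu ((1) * V2 a x 11) else 0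


def Wl1 : Matrix (Fin 20) (Fin 16) ℚ := fun i j => w1 i.val j.val
def bl1 : Fin 20 → ℚ := fun i => b1 i.val
def Wl2 (a : ℚ) : Matrix (Fin 19) (Fin 20) ℚ := fun i j => w2 a i.val j.val
def bl2 : Fin 19 → ℚ := fun i => b2 i.val
def Wl3 : Matrix (Fin 16) (Fin 19) ℚ := fun i j => w3 i.val j.val
def bl3 : Fin 16 → ℚ := fun i => b3 i.val

def lay1 : (Fin 16 → ℚ) → (Fin 20 → ℚ) := fun x i => relu ((∑ j, Wl1 i j * x j) + bl1 i)
def lay2 (a : ℚ) : (Fin 16 → ℚ) → (Fin 19 → ℚ) :=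
  fun x i => relu ((∑ j, Wl2 a i j * lay1 x j) + bl2 i)
def Fnet (a : ℚ) : (Fin 16 → ℚ) → (Fin 16 → ℚ) :=
  fun x i => relu ((∑ j, Wl3 i j * lay2 a x j) + bl3 i)

lemma Fnet_isMLP (a : ℚ) : IsMLP (Fnet a) :=
  IsMLP.step (IsMLP.step (IsMLP.base Wl1 bl1) (Wl2 a) bl2) Wl3 bl3

lemma sum_to_range {n : ℕ} (w : ℕ → ℚ) (x : Fin n → ℚ) :
    (∑ j : Fin n, w j.val * x j) = ∑ k ∈ Finset.range n, w k * gv x k := by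
  rw [← Fin.sum_univ_eq_sum_range (fun k => w k * gv x k) n]
  exact Finset.sum_congr rfl fun j _ => by simp [gv]

lemma lay1_eval (x : Fin 16 → ℚ) (i : Fin 20) : lay1 x i = V1 x i.val := by
  obtain ⟨k, hk⟩ := i
  show relu ((∑ j, Wl1 ⟨k, hk⟩ j * x j) + bl1 ⟨k, hk⟩) = V1 x k
  have h : (∑ j, Wl1 ⟨k, hk⟩ j * x j) = ∑ m ∈ Finset.range 16, w1 k m * gv x m :=
    sum_to_range (w1 k) x
  rw [h]
  interval_cases k <;> simp [w1, b1, bl1, V1, Finset.sum_range_succ] <;> ring_nf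

lemma gv_lay1 (x : Fin 16 → ℚ) (m : ℕ) :
    gv (lay1 x) m = if m < 20 then V1 x m else 0 := by
  unfold gv; split
  · rw [lay1_eval]
  · simp_all

lemma lay2_eval (a : ℚ) (x : Fin 16 → ℚ) (i : Fin 19) : lay2 a x i = V2 a x i.val := by
  obtain ⟨k, hk⟩ := i
  show relu ((∑ j, Wl2 a ⟨k, hk⟩ j * lay1 x j) + bl2 ⟨k, hk⟩) = V2 a x k
  have h : (∑ j, Wl2 a ⟨k, hk⟩ j * lay1 x j) = ∑ m ∈ Finset.range 20, w2 a k m * gv (lay1 x) m :=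
    sum_to_range (w2 a k) (lay1 x)
  rw [h]
  interval_cases k <;> simp [w2, b2, bl2, V2, gv_lay1, Finset.sum_range_succ] <;> ring_nf

lemma gv_lay2 (a : ℚ) (x : Fin 16 → ℚ) (m : ℕ) :
    gv (lay2 a x) m = if m < 19 then V2 a x m else 0 := by
  unfold gv; split
  · rw [lay2_eval]
  · simp_all

lemma Fnet_eval (a : ℚ) (x : Fin 16 → ℚ) (i : Fin 16) : Fnet a x i = Phi a x i.val := by
  obtain ⟨k, hk⟩ := i
  show relu ((∑ j, Wl3 ⟨k, hk⟩ j * lay2 a x j) + bl3 ⟨k, hk⟩) = Phi a x k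
  have h : (∑ j, Wl3 ⟨k, hk⟩ j * lay2 a x j) = ∑ m ∈ Finset.range 19, w3 k m * gv (lay2 a x) m :=
    sum_to_range (w3 k) (lay2 a x)
  rw [h]
  interval_cases k <;> simp [w3, b3, bl3, Phi, gv_lay2, Finset.sum_range_succ] <;> ring_nf
-- ===================== Model =====================

def tri (m t : ℕ) : ℕ := ∑ j ∈ Finset.range t, (m - j)
def Mv (x₁ x₂ : ℕ) : ℕ := x₁ + 3 * x₂
def ufn (x₁ x₂ t : ℕ) : ℕ := tri (x₁ + x₂) t - tri x₁ t - tri x₂ t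
def vfn (x₂ t : ℕ) : ℕ := 2 * tri x₂ t - min t x₂
def man (x₁ x₂ t : ℕ) : ℕ := ufn x₁ x₂ t + vfn x₂ t
def mbn (x₁ x₂ t : ℕ) : ℕ := (ufn x₁ x₂ t - vfn x₂ t) + (vfn x₂ t - ufn x₁ x₂ t)

def raq (x₁ x₂ t : ℕ) : ℚ :=
  if t ≤ Mv x₁ x₂ then (man x₁ x₂ t : ℚ)
  else max ((man x₁ x₂ (Mv x₁ x₂) : ℚ) - ((t - Mv x₁ x₂ : ℕ) : ℚ)) 0
def Zaq (x₁ x₂ t : ℕ) : ℚ :=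
  if t ≤ Mv x₁ x₂ then (man x₁ x₂ t : ℚ)
  else max ((man x₁ x₂ (Mv x₁ x₂) : ℚ) - 2 * ((t - Mv x₁ x₂ : ℕ) : ℚ)) 0
def rbq (x₁ x₂ t : ℕ) : ℚ :=
  if t ≤ Mv x₁ x₂ then (mbn x₁ x₂ t : ℚ)
  else max ((mbn x₁ x₂ (Mv x₁ x₂) : ℚ) - ((t - Mv x₁ x₂ : ℕ) : ℚ)) 0
def Zbq (x₁ x₂ t : ℕ) : ℚ :=
  if t ≤ Mv x₁ x₂ then (mbn x₁ x₂ t : ℚ)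
  else max ((mbn x₁ x₂ (Mv x₁ x₂) : ℚ) - 2 * ((t - Mv x₁ x₂ : ℕ) : ℚ)) 0
def Baq (x₁ x₂ t : ℕ) : ℚ := ∑ j ∈ Finset.range t, relu (raq x₁ x₂ j - Zaq x₁ x₂ j)
def Bbq (x₁ x₂ t : ℕ) : ℚ := ∑ j ∈ Finset.range t, relu (rbq x₁ x₂ j - Zbq x₁ x₂ j)

def sigc (a : ℚ) (x₁ x₂ t k : ℕ) : ℚ :=
  match k with
  | 0 => if t = 0 then 1 else 0
  | 1 => 0
  | 2 => (x₁ : ℚ)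
  | 3 => (x₂ : ℚ)
  | 4 => if t = 0 then 0 else relu (a * Baq x₁ x₂ (t-1) - a * Bbq x₁ x₂ (t-1))
  | 5 => ((min t (Mv x₁ x₂) : ℕ) : ℚ)
  | 6 => (tri (x₁+x₂) t : ℚ)
  | 7 => (tri x₁ t : ℚ)
  | 8 => (tri x₂ t : ℚ)
  | 9 => ((min t x₂ : ℕ) : ℚ)
  | 10 => raq x₁ x₂ t
  | 11 => Zaq x₁ x₂ t
  | 12 => Baq x₁ x₂ t
  | 13 => rbq x₁ x₂ t
  | 14 => Zbq x₁ x₂ t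
  | 15 => Bbq x₁ x₂ t
  | _ => 0

def sig (a : ℚ) (x₁ x₂ t : ℕ) : Fin 16 → ℚ := fun i => sigc a x₁ x₂ t i.val

-- ===================== basic ℕ lemmas =====================

lemma tri_succ (m t : ℕ) : tri m (t+1) = tri m t + (m - t) := Finset.sum_range_succ _ _

lemma tri_stab (m : ℕ) : ∀ t, m ≤ t → tri m t = tri m m := by
  intro t
  induction t with
  | zero => intro h; interval_cases m; rfl
  | succ t ih =>
    intro h
    rcases Nat.lt_or_ge t m with h2 | h2
    · have : m = t + 1 := by omega
      rw [this]
    · rw [tri_succ, ih h2]; have : m - t = 0 := by omega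
      omega

lemma tri_le (x₁ x₂ t : ℕ) : tri x₁ t + tri x₂ t ≤ tri (x₁ + x₂) t := by
  unfold tri
  rw [← Finset.sum_add_distrib]
  exact Finset.sum_le_sum fun i _ => by omega

lemma min_le_two_tri (x₂ t : ℕ) : min t x₂ ≤ 2 * tri x₂ t := by
  induction t with
  | zero => simp
  | succ t ih => rw [tri_succ]; omega

lemma tri_self (m : ℕ) : 2 * tri m m = m * m + m := by
  induction m with
  | zero => simp [tri]
  | succ n ih =>
    have h1 : tri (n+1) n = tri n n + n := by
      unfold tri
      rw [show (∑ j ∈ Finset.range n, (n + 1 - j)) = ∑ j ∈ Finset.range n, ((n - j) + 1) from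
        Finset.sum_congr rfl fun j hj => by have := Finset.mem_range.1 hj; omega]
      rw [Finset.sum_add_distrib]
      simp
    have h2 : (n+1) * (n+1) = n * n + 2*n + 1 := by ring
    rw [tri_succ, h1]
    omega

lemma relu_cast_sub (p q : ℕ) : relu ((p : ℚ) - (q : ℚ)) = ((p - q : ℕ) : ℚ) := by
  rcases le_total q p with h | h
  · rw [Nat.cast_sub h]
    exact relu_of_nonneg (by
      have : (q : ℚ) ≤ (p : ℚ) := by exact_mod_cast h
      linarith)
  · have h0 : p - q = 0 := by omega
    rw [h0]
    have : (p : ℚ) ≤ (q : ℚ) := by exact_mod_cast h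
    show max _ _ = _
    rw [max_eq_right (by push_cast; linarith)]
    simp

lemma max_cast_sub (p q : ℕ) : max ((p : ℚ) - (q : ℚ)) 0 = ((p - q : ℕ) : ℚ) :=
  relu_cast_sub p q

lemma relu_max_sub_one (y : ℚ) : relu (max y 0 - 1) = max (y - 1) 0 := by
  rcases le_total y 0 with h | h
  · rw [max_eq_right h, max_eq_right (by linarith)]
    show max _ _ = _
    rw [max_eq_right (by norm_num)]
  · rw [max_eq_left h]; rfl

lemma relu_max_sub_two (y : ℚ) : relu (max y 0 - 2) = max (y - 2) 0 := by
  rcases le_total y 0 with h | h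
  · rw [max_eq_right h, max_eq_right (by linarith)]
    show max _ _ = _
    rw [max_eq_right (by norm_num)]
  · rw [max_eq_left h]; rfl

lemma raq_nonneg (x₁ x₂ t : ℕ) : 0 ≤ raq x₁ x₂ t := by
  unfold raq; split
  · positivity
  · exact le_max_right _ _
lemma Zaq_nonneg (x₁ x₂ t : ℕ) : 0 ≤ Zaq x₁ x₂ t := by
  unfold Zaq; split
  · positivity
  · exact le_max_right _ _
lemma rbq_nonneg (x₁ x₂ t : ℕ) : 0 ≤ rbq x₁ x₂ t := by
  unfold rbq; split
  · positivity
  · exact le_max_right _ _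
lemma Zbq_nonneg (x₁ x₂ t : ℕ) : 0 ≤ Zbq x₁ x₂ t := by
  unfold Zbq; split
  · positivity
  · exact le_max_right _ _
lemma Baq_nonneg (x₁ x₂ t : ℕ) : 0 ≤ Baq x₁ x₂ t :=
  Finset.sum_nonneg fun j _ => relu_nonneg _
lemma Bbq_nonneg (x₁ x₂ t : ℕ) : 0 ≤ Bbq x₁ x₂ t :=
  Finset.sum_nonneg fun j _ => relu_nonneg _

lemma sigc_nonneg (a : ℚ) (x₁ x₂ t k : ℕ) : 0 ≤ sigc a x₁ x₂ t k := by
  unfold sigc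
  split
  · split <;> norm_num
  · norm_num
  · exact Nat.cast_nonneg _
  · exact Nat.cast_nonneg _
  · split
    · norm_num
    · exact relu_nonneg _
  · exact Nat.cast_nonneg _
  · exact Nat.cast_nonneg _
  · exact Nat.cast_nonneg _
  · exact Nat.cast_nonneg _
  · exact Nat.cast_nonneg _
  · exact raq_nonneg _ _ _
  · exact Zaq_nonneg _ _ _
  · exact Baq_nonneg _ _ _
  · exact rbq_nonneg _ _ _
  · exact Zbq_nonneg _ _ _
  · exact Bbq_nonneg _ _ _
  · norm_num

lemma gv_sig (a : ℚ) (x₁ x₂ t k : ℕ) :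
    gv (sig a x₁ x₂ t) k = if k < 16 then sigc a x₁ x₂ t k else 0 := by
  unfold gv sig; split <;> simp_all

-- ===================== V1 values on the model =====================

section Vals
variable (a : ℚ) (x₁ x₂ t : ℕ)

lemma V1s0 : V1 (sig a x₁ x₂ t) 0 = (x₁ : ℚ) := by
  simp [V1, gv_sig, sigc]; exact relu_of_nonneg (Nat.cast_nonneg _)
lemma V1s1 : V1 (sig a x₁ x₂ t) 1 = (x₂ : ℚ) := by
  simp [V1, gv_sig, sigc]; exact relu_of_nonneg (Nat.cast_nonneg _)
lemma V1s2 : V1 (sig a x₁ x₂ t) 2 = ((min t (Mv x₁ x₂) : ℕ) : ℚ) := by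
  simp [V1, gv_sig, sigc]; exact relu_of_nonneg (le_min (Nat.cast_nonneg _) (Nat.cast_nonneg _))
lemma V1s3 : V1 (sig a x₁ x₂ t) 3 = ((tri (x₁+x₂) t : ℕ) : ℚ) := by
  simp [V1, gv_sig, sigc]; exact relu_of_nonneg (Nat.cast_nonneg _)
lemma V1s4 : V1 (sig a x₁ x₂ t) 4 = ((tri x₁ t : ℕ) : ℚ) := by
  simp [V1, gv_sig, sigc]; exact relu_of_nonneg (Nat.cast_nonneg _)
lemma V1s5 : V1 (sig a x₁ x₂ t) 5 = ((tri x₂ t : ℕ) : ℚ) := by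
  simp [V1, gv_sig, sigc]; exact relu_of_nonneg (Nat.cast_nonneg _)
lemma V1s6 : V1 (sig a x₁ x₂ t) 6 = ((min t x₂ : ℕ) : ℚ) := by
  simp [V1, gv_sig, sigc]; exact relu_of_nonneg (le_min (Nat.cast_nonneg _) (Nat.cast_nonneg _))
lemma V1s7 : V1 (sig a x₁ x₂ t) 7 = raq x₁ x₂ t := by
  simp [V1, gv_sig, sigc]; exact relu_of_nonneg (raq_nonneg _ _ _)
lemma V1s8 : V1 (sig a x₁ x₂ t) 8 = Zaq x₁ x₂ t := by
  simp [V1, gv_sig, sigc]; exact relu_of_nonneg (Zaq_nonneg _ _ _)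
lemma V1s9 : V1 (sig a x₁ x₂ t) 9 = Baq x₁ x₂ t := by
  simp [V1, gv_sig, sigc]; exact relu_of_nonneg (Baq_nonneg _ _ _)
lemma V1s10 : V1 (sig a x₁ x₂ t) 10 = rbq x₁ x₂ t := by
  simp [V1, gv_sig, sigc]; exact relu_of_nonneg (rbq_nonneg _ _ _)
lemma V1s11 : V1 (sig a x₁ x₂ t) 11 = Zbq x₁ x₂ t := by
  simp [V1, gv_sig, sigc]; exact relu_of_nonneg (Zbq_nonneg _ _ _)
lemma V1s12 : V1 (sig a x₁ x₂ t) 12 = Bbq x₁ x₂ t := by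
  simp [V1, gv_sig, sigc]; exact relu_of_nonneg (Bbq_nonneg _ _ _)

lemma V1s13 : V1 (sig a x₁ x₂ t) 13 = ((min t (Mv x₁ x₂) + 1 - Mv x₁ x₂ : ℕ) : ℚ) := by
  rw [← relu_cast_sub]
  simp [V1, gv_sig, sigc, Mv]
  congr 1
  push_cast
  ring
lemma V1s14 : V1 (sig a x₁ x₂ t) 14 = (((x₁+x₂) - min t (Mv x₁ x₂) : ℕ) : ℚ) := by
  rw [← relu_cast_sub]
  simp [V1, gv_sig, sigc, Mv]
  congr 1
  push_cast
  ring
lemma V1s15 : V1 (sig a x₁ x₂ t) 15 = ((x₁ - min t (Mv x₁ x₂) : ℕ) : ℚ) := by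
  rw [← relu_cast_sub]
  simp [V1, gv_sig, sigc, Mv]
  congr 1
  push_cast
  ring
lemma V1s16 : V1 (sig a x₁ x₂ t) 16 = ((x₂ - min t (Mv x₁ x₂) : ℕ) : ℚ) := by
  rw [← relu_cast_sub]
  simp [V1, gv_sig, sigc, Mv]
  congr 1
  push_cast
  ring
lemma V1s17 : V1 (sig a x₁ x₂ t) 17 = ((min t x₂ + 1 - x₂ : ℕ) : ℚ) := by
  rw [← relu_cast_sub]
  simp [V1, gv_sig, sigc]
  congr 1
  push_cast
  ring
lemma V1s18 : V1 (sig a x₁ x₂ t) 18 = relu (raq x₁ x₂ t - Zaq x₁ x₂ t) := by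
  simp [V1, gv_sig, sigc]; rw [← sub_eq_add_neg]
lemma V1s19 : V1 (sig a x₁ x₂ t) 19 = relu (rbq x₁ x₂ t - Zbq x₁ x₂ t) := by
  simp [V1, gv_sig, sigc]; rw [← sub_eq_add_neg]

end Vals

-- ===================== helper stability lemmas =====================

lemma raq_ge (x₁ x₂ t : ℕ) (h : Mv x₁ x₂ ≤ t) :
    raq x₁ x₂ t = max ((man x₁ x₂ (Mv x₁ x₂) : ℚ) - ((t - Mv x₁ x₂ : ℕ) : ℚ)) 0 := by
  unfold raq; split
  · rw [show t = Mv x₁ x₂ from by omega]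
    rw [Nat.sub_self]
    push_cast
    rw [sub_zero, max_eq_left (Nat.cast_nonneg _)]
  · rfl

lemma Zaq_ge (x₁ x₂ t : ℕ) (h : Mv x₁ x₂ ≤ t) :
    Zaq x₁ x₂ t = max ((man x₁ x₂ (Mv x₁ x₂) : ℚ) - 2 * ((t - Mv x₁ x₂ : ℕ) : ℚ)) 0 := by
  unfold Zaq; split
  · rw [show t = Mv x₁ x₂ from by omega]
    rw [Nat.sub_self]
    push_cast
    rw [mul_zero, sub_zero, max_eq_left (Nat.cast_nonneg _)]
  · rfl

lemma rbq_ge (x₁ x₂ t : ℕ) (h : Mv x₁ x₂ ≤ t) :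
    rbq x₁ x₂ t = max ((mbn x₁ x₂ (Mv x₁ x₂) : ℚ) - ((t - Mv x₁ x₂ : ℕ) : ℚ)) 0 := by
  unfold rbq; split
  · rw [show t = Mv x₁ x₂ from by omega]
    rw [Nat.sub_self]
    push_cast
    rw [sub_zero, max_eq_left (Nat.cast_nonneg _)]
  · rfl

lemma Zbq_ge (x₁ x₂ t : ℕ) (h : Mv x₁ x₂ ≤ t) :
    Zbq x₁ x₂ t = max ((mbn x₁ x₂ (Mv x₁ x₂) : ℚ) - 2 * ((t - Mv x₁ x₂ : ℕ) : ℚ)) 0 := by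
  unfold Zbq; split
  · rw [show t = Mv x₁ x₂ from by omega]
    rw [Nat.sub_self]
    push_cast
    rw [mul_zero, sub_zero, max_eq_left (Nat.cast_nonneg _)]
  · rfl

lemma tri_stab' (m t : ℕ) (hm : m ≤ t) : tri m (t+1) = tri m t := by
  rw [tri_succ]; omega

lemma ufn_stab (x₁ x₂ t : ℕ) (h : Mv x₁ x₂ ≤ t) : ufn x₁ x₂ (t+1) = ufn x₁ x₂ t := by
  unfold Mv at h
  unfold ufn
  rw [tri_stab' _ _ (by omega), tri_stab' _ _ (by omega), tri_stab' _ _ (by omega)]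

lemma vfn_stab (x₂ t : ℕ) (x₁ : ℕ) (h : Mv x₁ x₂ ≤ t) : vfn x₂ (t+1) = vfn x₂ t := by
  unfold Mv at h
  unfold vfn
  rw [tri_stab' _ _ (by omega), show min (t+1) x₂ = min t x₂ from by omega]

-- ===================== V2 values on the model =====================

section Vals2
variable (a : ℚ) (x₁ x₂ t : ℕ)

lemma V2s0 : V2 a (sig a x₁ x₂ t) 0 = (x₁ : ℚ) := by
  simp [V2, V1s0]; exact relu_of_nonneg (Nat.cast_nonneg _)
lemma V2s1 : V2 a (sig a x₁ x₂ t) 1 = (x₂ : ℚ) := by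
  simp [V2, V1s1]; exact relu_of_nonneg (Nat.cast_nonneg _)

lemma V2s2 : V2 a (sig a x₁ x₂ t) 2 = ((min (t+1) (Mv x₁ x₂) : ℕ) : ℚ) := by
  have h1 : V2 a (sig a x₁ x₂ t) 2
      = relu (((min t (Mv x₁ x₂) + 1 : ℕ) : ℚ) - ((min t (Mv x₁ x₂) + 1 - Mv x₁ x₂ : ℕ) : ℚ)) := by
    simp [V2, V1s2, V1s13]
    all_goals (congr 1; push_cast; ring)
  rw [h1, relu_cast_sub]
  congr 1
  omega

lemma V2s3 : V2 a (sig a x₁ x₂ t) 3 = ((tri (x₁+x₂) (t+1) : ℕ) : ℚ) := by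
  have h1 : V2 a (sig a x₁ x₂ t) 3
      = relu (((tri (x₁+x₂) t + ((x₁+x₂) - min t (Mv x₁ x₂)) : ℕ) : ℚ)) := by
    simp [V2, V1s3, V1s14]
    all_goals (congr 1; push_cast; ring)
  rw [h1, relu_of_nonneg (Nat.cast_nonneg _)]
  congr 1
  have h := tri_succ (x₁+x₂) t
  unfold Mv
  omega

lemma V2s4 : V2 a (sig a x₁ x₂ t) 4 = ((tri x₁ (t+1) : ℕ) : ℚ) := by
  have h1 : V2 a (sig a x₁ x₂ t) 4
      = relu (((tri x₁ t + (x₁ - min t (Mv x₁ x₂)) : ℕ) : ℚ)) := by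
    simp [V2, V1s4, V1s15]
    all_goals (congr 1; push_cast; ring)
  rw [h1, relu_of_nonneg (Nat.cast_nonneg _)]
  congr 1
  have h := tri_succ x₁ t
  unfold Mv
  omega

lemma V2s5 : V2 a (sig a x₁ x₂ t) 5 = ((tri x₂ (t+1) : ℕ) : ℚ) := by
  have h1 : V2 a (sig a x₁ x₂ t) 5
      = relu (((tri x₂ t + (x₂ - min t (Mv x₁ x₂)) : ℕ) : ℚ)) := by
    simp [V2, V1s5, V1s16]
    all_goals (congr 1; push_cast; ring)
  rw [h1, relu_of_nonneg (Nat.cast_nonneg _)]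
  congr 1
  have h := tri_succ x₂ t
  unfold Mv
  omega

lemma V2s6 : V2 a (sig a x₁ x₂ t) 6 = ((min (t+1) x₂ : ℕ) : ℚ) := by
  have h1 : V2 a (sig a x₁ x₂ t) 6
      = relu (((min t x₂ + 1 : ℕ) : ℚ) - ((min t x₂ + 1 - x₂ : ℕ) : ℚ)) := by
    simp [V2, V1s6, V1s17]
    all_goals (congr 1; push_cast; ring)
  rw [h1, relu_cast_sub]
  congr 1
  omega

lemma V2s7 : V2 a (sig a x₁ x₂ t) 7 = relu (a * Baq x₁ x₂ t - a * Bbq x₁ x₂ t) := by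
  simp [V2, V1s9, V1s12]
  congr 1
  ring

lemma V2s8 : V2 a (sig a x₁ x₂ t) 8 = raq x₁ x₂ (t+1) := by
  have h1 : V2 a (sig a x₁ x₂ t) 8
      = relu (raq x₁ x₂ t + (((x₁+x₂) - min t (Mv x₁ x₂) : ℕ) : ℚ)
          - ((x₁ - min t (Mv x₁ x₂) : ℕ) : ℚ) + ((x₂ - min t (Mv x₁ x₂) : ℕ) : ℚ)
          + ((min t x₂ + 1 - x₂ : ℕ) : ℚ) - 1 - ((min t (Mv x₁ x₂) + 1 - Mv x₁ x₂ : ℕ) : ℚ)) := by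
    simp [V2, V1s7, V1s13, V1s14, V1s15, V1s16, V1s17]
    all_goals (congr 1; push_cast; ring)
  rw [h1]
  rcases Nat.lt_or_ge t (Mv x₁ x₂) with ht | ht
  · have hra : raq x₁ x₂ t = ((man x₁ x₂ t : ℕ) : ℚ) := by
      unfold raq; rw [if_pos (by omega)]
    have hra' : raq x₁ x₂ (t+1) = ((man x₁ x₂ (t+1) : ℕ) : ℚ) := by
      unfold raq; rw [if_pos (by omega)]
    have hn1 : min t (Mv x₁ x₂) + 1 - Mv x₁ x₂ = 0 := by omega
    rw [hra, hra', hn1]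
    have h2 : relu (((man x₁ x₂ t + ((x₁+x₂) - min t (Mv x₁ x₂)) + (x₂ - min t (Mv x₁ x₂))
        + (min t x₂ + 1 - x₂) : ℕ) : ℚ) - (((x₁ - min t (Mv x₁ x₂)) + 1 : ℕ) : ℚ))
        = ((man x₁ x₂ t + ((x₁+x₂) - min t (Mv x₁ x₂)) + (x₂ - min t (Mv x₁ x₂))
        + (min t x₂ + 1 - x₂) - ((x₁ - min t (Mv x₁ x₂)) + 1) : ℕ) : ℚ) := relu_cast_sub _ _
    rw [show (((man x₁ x₂ t : ℕ) : ℚ) + (((x₁+x₂) - min t (Mv x₁ x₂) : ℕ) : ℚ)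
          - ((x₁ - min t (Mv x₁ x₂) : ℕ) : ℚ) + ((x₂ - min t (Mv x₁ x₂) : ℕ) : ℚ)
          + ((min t x₂ + 1 - x₂ : ℕ) : ℚ) - 1 - ((0 : ℕ) : ℚ))
        = (((man x₁ x₂ t + ((x₁+x₂) - min t (Mv x₁ x₂)) + (x₂ - min t (Mv x₁ x₂))
        + (min t x₂ + 1 - x₂) : ℕ) : ℚ) - (((x₁ - min t (Mv x₁ x₂)) + 1 : ℕ) : ℚ)) from by
      push_cast; ring]
    rw [h2]
    congr 1
    have h3 := tri_succ (x₁+x₂) t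
    have h4 := tri_succ x₁ t
    have h5 := tri_succ x₂ t
    have h6 := tri_le x₁ x₂ t
    have h7 := tri_le x₁ x₂ (t+1)
    have h8 := min_le_two_tri x₂ t
    have h9 := min_le_two_tri x₂ (t+1)
    unfold Mv at *
    unfold man ufn vfn
    omega
  · have hz2 : (x₁+x₂) - min t (Mv x₁ x₂) = 0 := by unfold Mv at *; omega
    have hz3 : x₁ - min t (Mv x₁ x₂) = 0 := by unfold Mv at *; omega
    have hz4 : x₂ - min t (Mv x₁ x₂) = 0 := by unfold Mv at *; omega
    have hz5 : min t x₂ + 1 - x₂ = 1 := by unfold Mv at *; omega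
    have hz1 : min t (Mv x₁ x₂) + 1 - Mv x₁ x₂ = 1 := by omega
    rw [hz1, hz2, hz3, hz4, hz5]
    rw [raq_ge x₁ x₂ t ht, raq_ge x₁ x₂ (t+1) (by omega)]
    rw [show (max ((man x₁ x₂ (Mv x₁ x₂) : ℚ) - ((t - Mv x₁ x₂ : ℕ) : ℚ)) 0
          + ((0:ℕ):ℚ) - ((0:ℕ):ℚ) + ((0:ℕ):ℚ) + ((1:ℕ):ℚ) - 1 - ((1:ℕ):ℚ))
        = (max ((man x₁ x₂ (Mv x₁ x₂) : ℚ) - ((t - Mv x₁ x₂ : ℕ) : ℚ)) 0 - 1) from by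
      push_cast; ring]
    rw [relu_max_sub_one]
    congr 1
    rw [Nat.cast_sub (by omega), Nat.cast_sub (by omega)]
    push_cast
    ring

lemma V2s9 : V2 a (sig a x₁ x₂ t) 9 = Zaq x₁ x₂ (t+1) := by
  have h1 : V2 a (sig a x₁ x₂ t) 9
      = relu (Zaq x₁ x₂ t + (((x₁+x₂) - min t (Mv x₁ x₂) : ℕ) : ℚ)
          - ((x₁ - min t (Mv x₁ x₂) : ℕ) : ℚ) + ((x₂ - min t (Mv x₁ x₂) : ℕ) : ℚ)
          + ((min t x₂ + 1 - x₂ : ℕ) : ℚ) - 1 - 2 * ((min t (Mv x₁ x₂) + 1 - Mv x₁ x₂ : ℕ) : ℚ)) := by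
    simp [V2, V1s8, V1s13, V1s14, V1s15, V1s16, V1s17]
    all_goals (congr 1; push_cast; ring)
  rw [h1]
  rcases Nat.lt_or_ge t (Mv x₁ x₂) with ht | ht
  · have hra : Zaq x₁ x₂ t = ((man x₁ x₂ t : ℕ) : ℚ) := by
      unfold Zaq; rw [if_pos (by omega)]
    have hra' : Zaq x₁ x₂ (t+1) = ((man x₁ x₂ (t+1) : ℕ) : ℚ) := by
      unfold Zaq; rw [if_pos (by omega)]
    have hn1 : min t (Mv x₁ x₂) + 1 - Mv x₁ x₂ = 0 := by omega
    rw [hra, hra', hn1]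
    have h2 : relu (((man x₁ x₂ t + ((x₁+x₂) - min t (Mv x₁ x₂)) + (x₂ - min t (Mv x₁ x₂))
        + (min t x₂ + 1 - x₂) : ℕ) : ℚ) - (((x₁ - min t (Mv x₁ x₂)) + 1 : ℕ) : ℚ))
        = ((man x₁ x₂ t + ((x₁+x₂) - min t (Mv x₁ x₂)) + (x₂ - min t (Mv x₁ x₂))
        + (min t x₂ + 1 - x₂) - ((x₁ - min t (Mv x₁ x₂)) + 1) : ℕ) : ℚ) := relu_cast_sub _ _
    rw [show (((man x₁ x₂ t : ℕ) : ℚ) + (((x₁+x₂) - min t (Mv x₁ x₂) : ℕ) : ℚ)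
          - ((x₁ - min t (Mv x₁ x₂) : ℕ) : ℚ) + ((x₂ - min t (Mv x₁ x₂) : ℕ) : ℚ)
          + ((min t x₂ + 1 - x₂ : ℕ) : ℚ) - 1 - 2 * ((0 : ℕ) : ℚ))
        = (((man x₁ x₂ t + ((x₁+x₂) - min t (Mv x₁ x₂)) + (x₂ - min t (Mv x₁ x₂))
        + (min t x₂ + 1 - x₂) : ℕ) : ℚ) - (((x₁ - min t (Mv x₁ x₂)) + 1 : ℕ) : ℚ)) from by
      push_cast; ring]
    rw [h2]
    congr 1
    have h3 := tri_succ (x₁+x₂) t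
    have h4 := tri_succ x₁ t
    have h5 := tri_succ x₂ t
    have h6 := tri_le x₁ x₂ t
    have h7 := tri_le x₁ x₂ (t+1)
    have h8 := min_le_two_tri x₂ t
    have h9 := min_le_two_tri x₂ (t+1)
    unfold Mv at *
    unfold man ufn vfn
    omega
  · have hz2 : (x₁+x₂) - min t (Mv x₁ x₂) = 0 := by unfold Mv at *; omega
    have hz3 : x₁ - min t (Mv x₁ x₂) = 0 := by unfold Mv at *; omega
    have hz4 : x₂ - min t (Mv x₁ x₂) = 0 := by unfold Mv at *; omega
    have hz5 : min t x₂ + 1 - x₂ = 1 := by unfold Mv at *; omega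
    have hz1 : min t (Mv x₁ x₂) + 1 - Mv x₁ x₂ = 1 := by omega
    rw [hz1, hz2, hz3, hz4, hz5]
    rw [Zaq_ge x₁ x₂ t ht, Zaq_ge x₁ x₂ (t+1) (by omega)]
    rw [show (max ((man x₁ x₂ (Mv x₁ x₂) : ℚ) - 2 * ((t - Mv x₁ x₂ : ℕ) : ℚ)) 0
          + ((0:ℕ):ℚ) - ((0:ℕ):ℚ) + ((0:ℕ):ℚ) + ((1:ℕ):ℚ) - 1 - 2 * ((1:ℕ):ℚ))
        = (max ((man x₁ x₂ (Mv x₁ x₂) : ℚ) - 2 * ((t - Mv x₁ x₂ : ℕ) : ℚ)) 0 - 2) from by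
      push_cast; ring]
    rw [relu_max_sub_two]
    congr 1
    rw [Nat.cast_sub (by omega), Nat.cast_sub (by omega)]
    push_cast
    ring

lemma V2s10 : V2 a (sig a x₁ x₂ t) 10 = Baq x₁ x₂ (t+1) := by
  simp [V2, V1s9, V1s18]
  rw [relu_of_nonneg (add_nonneg (Baq_nonneg _ _ _) (relu_nonneg _))]
  rw [show Baq x₁ x₂ (t+1) = Baq x₁ x₂ t + relu (raq x₁ x₂ t - Zaq x₁ x₂ t) from
    Finset.sum_range_succ _ _]

lemma V2s11 : V2 a (sig a x₁ x₂ t) 11 = Bbq x₁ x₂ (t+1) := by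
  simp [V2, V1s12, V1s19]
  rw [relu_of_nonneg (add_nonneg (Bbq_nonneg _ _ _) (relu_nonneg _))]
  rw [show Bbq x₁ x₂ (t+1) = Bbq x₁ x₂ t + relu (rbq x₁ x₂ t - Zbq x₁ x₂ t) from
    Finset.sum_range_succ _ _]

lemma V2s12 : V2 a (sig a x₁ x₂ t) 12 = ((ufn x₁ x₂ t - vfn x₂ t : ℕ) : ℚ) := by
  have h1 : V2 a (sig a x₁ x₂ t) 12
      = relu (((tri (x₁+x₂) t + min t x₂ : ℕ) : ℚ) - ((tri x₁ t + 3 * tri x₂ t : ℕ) : ℚ)) := by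
    simp [V2, V1s3, V1s4, V1s5, V1s6]
    all_goals (congr 1; push_cast; ring)
  rw [h1, relu_cast_sub]
  congr 1
  have h6 := tri_le x₁ x₂ t
  have h8 := min_le_two_tri x₂ t
  unfold ufn vfn
  omega

lemma V2s13 : V2 a (sig a x₁ x₂ t) 13 = ((vfn x₂ t - ufn x₁ x₂ t : ℕ) : ℚ) := by
  have h1 : V2 a (sig a x₁ x₂ t) 13
      = relu (((tri x₁ t + 3 * tri x₂ t : ℕ) : ℚ) - ((tri (x₁+x₂) t + min t x₂ : ℕ) : ℚ)) := by
    simp [V2, V1s3, V1s4, V1s5, V1s6]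
    all_goals (congr 1; push_cast; ring)
  rw [h1, relu_cast_sub]
  congr 1
  have h6 := tri_le x₁ x₂ t
  have h8 := min_le_two_tri x₂ t
  unfold ufn vfn
  omega

lemma V2s14 : V2 a (sig a x₁ x₂ t) 14 = ((ufn x₁ x₂ (t+1) - vfn x₂ (t+1) : ℕ) : ℚ) := by
  have h1 : V2 a (sig a x₁ x₂ t) 14
      = relu (((tri (x₁+x₂) t + ((x₁+x₂) - min t (Mv x₁ x₂)) + min t x₂ + 1 : ℕ) : ℚ)
          - ((tri x₁ t + (x₁ - min t (Mv x₁ x₂)) + 3 * tri x₂ t + 3 * (x₂ - min t (Mv x₁ x₂))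
              + (min t x₂ + 1 - x₂) : ℕ) : ℚ)) := by
    simp [V2, V1s3, V1s4, V1s5, V1s6, V1s14, V1s15, V1s16, V1s17]
    all_goals (congr 1; push_cast; ring)
  rw [h1, relu_cast_sub]
  congr 1
  have h3 := tri_succ (x₁+x₂) t
  have h4 := tri_succ x₁ t
  have h5 := tri_succ x₂ t
  have h6 := tri_le x₁ x₂ (t+1)
  have h8 := min_le_two_tri x₂ (t+1)
  unfold Mv at *
  unfold ufn vfn
  omega

lemma V2s15 : V2 a (sig a x₁ x₂ t) 15 = ((vfn x₂ (t+1) - ufn x₁ x₂ (t+1) : ℕ) : ℚ) := by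
  have h1 : V2 a (sig a x₁ x₂ t) 15
      = relu (((tri x₁ t + (x₁ - min t (Mv x₁ x₂)) + 3 * tri x₂ t + 3 * (x₂ - min t (Mv x₁ x₂))
              + (min t x₂ + 1 - x₂) : ℕ) : ℚ)
          - ((tri (x₁+x₂) t + ((x₁+x₂) - min t (Mv x₁ x₂)) + min t x₂ + 1 : ℕ) : ℚ)) := by
    simp [V2, V1s3, V1s4, V1s5, V1s6, V1s14, V1s15, V1s16, V1s17]
    all_goals (congr 1; push_cast; ring)
  rw [h1, relu_cast_sub]
  congr 1
  have h3 := tri_succ (x₁+x₂) t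
  have h4 := tri_succ x₁ t
  have h5 := tri_succ x₂ t
  have h6 := tri_le x₁ x₂ (t+1)
  have h8 := min_le_two_tri x₂ (t+1)
  unfold Mv at *
  unfold ufn vfn
  omega

lemma V2s16 : V2 a (sig a x₁ x₂ t) 16 = rbq x₁ x₂ t := by
  simp [V2, V1s10]; exact relu_of_nonneg (rbq_nonneg _ _ _)
lemma V2s17 : V2 a (sig a x₁ x₂ t) 17 = Zbq x₁ x₂ t := by
  simp [V2, V1s11]; exact relu_of_nonneg (Zbq_nonneg _ _ _)
lemma V2s18 : V2 a (sig a x₁ x₂ t) 18 = ((min t (Mv x₁ x₂) + 1 - Mv x₁ x₂ : ℕ) : ℚ) := by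
  simp [V2, V1s13]; exact relu_of_nonneg (Nat.cast_nonneg _)

end Vals2

-- ===================== Phi values / step equation =====================

section Vals3
variable (a : ℚ) (x₁ x₂ t : ℕ)

lemma Phis0 : Phi a (sig a x₁ x₂ t) 0 = 0 := by simp [Phi, relu]
lemma Phis1 : Phi a (sig a x₁ x₂ t) 1 = 0 := by simp [Phi, relu]
lemma Phis2 : Phi a (sig a x₁ x₂ t) 2 = (x₁ : ℚ) := by
  simp [Phi, V2s0]; exact relu_of_nonneg (Nat.cast_nonneg _)
lemma Phis3 : Phi a (sig a x₁ x₂ t) 3 = (x₂ : ℚ) := by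
  simp [Phi, V2s1]; exact relu_of_nonneg (Nat.cast_nonneg _)
lemma Phis4 : Phi a (sig a x₁ x₂ t) 4 = relu (a * Baq x₁ x₂ t - a * Bbq x₁ x₂ t) := by
  simp [Phi, V2s7, relu_relu]
lemma Phis5 : Phi a (sig a x₁ x₂ t) 5 = ((min (t+1) (Mv x₁ x₂) : ℕ) : ℚ) := by
  simp [Phi, V2s2]; exact relu_of_nonneg (le_min (by positivity) (Nat.cast_nonneg _))
lemma Phis6 : Phi a (sig a x₁ x₂ t) 6 = ((tri (x₁+x₂) (t+1) : ℕ) : ℚ) := by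
  simp [Phi, V2s3]; exact relu_of_nonneg (Nat.cast_nonneg _)
lemma Phis7 : Phi a (sig a x₁ x₂ t) 7 = ((tri x₁ (t+1) : ℕ) : ℚ) := by
  simp [Phi, V2s4]; exact relu_of_nonneg (Nat.cast_nonneg _)
lemma Phis8 : Phi a (sig a x₁ x₂ t) 8 = ((tri x₂ (t+1) : ℕ) : ℚ) := by
  simp [Phi, V2s5]; exact relu_of_nonneg (Nat.cast_nonneg _)
lemma Phis9 : Phi a (sig a x₁ x₂ t) 9 = ((min (t+1) x₂ : ℕ) : ℚ) := by
  simp [Phi, V2s6]; exact relu_of_nonneg (le_min (by positivity) (Nat.cast_nonneg _))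
lemma Phis10 : Phi a (sig a x₁ x₂ t) 10 = raq x₁ x₂ (t+1) := by
  simp [Phi, V2s8]; exact relu_of_nonneg (raq_nonneg _ _ _)
lemma Phis11 : Phi a (sig a x₁ x₂ t) 11 = Zaq x₁ x₂ (t+1) := by
  simp [Phi, V2s9]; exact relu_of_nonneg (Zaq_nonneg _ _ _)
lemma Phis12 : Phi a (sig a x₁ x₂ t) 12 = Baq x₁ x₂ (t+1) := by
  simp [Phi, V2s10]; exact relu_of_nonneg (Baq_nonneg _ _ _)
lemma Phis15 : Phi a (sig a x₁ x₂ t) 15 = Bbq x₁ x₂ (t+1) := by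
  simp [Phi, V2s11]; exact relu_of_nonneg (Bbq_nonneg _ _ _)

lemma Phis13 : Phi a (sig a x₁ x₂ t) 13 = rbq x₁ x₂ (t+1) := by
  have h1 : Phi a (sig a x₁ x₂ t) 13
      = relu (rbq x₁ x₂ t
          + ((ufn x₁ x₂ (t+1) - vfn x₂ (t+1) : ℕ) : ℚ) + ((vfn x₂ (t+1) - ufn x₁ x₂ (t+1) : ℕ) : ℚ)
          - ((ufn x₁ x₂ t - vfn x₂ t : ℕ) : ℚ) - ((vfn x₂ t - ufn x₁ x₂ t : ℕ) : ℚ)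
          - ((min t (Mv x₁ x₂) + 1 - Mv x₁ x₂ : ℕ) : ℚ)) := by
    simp [Phi, V2s16, V2s14, V2s15, V2s12, V2s13, V2s18]
    all_goals (congr 1; push_cast; ring)
  rw [h1]
  rcases Nat.lt_or_ge t (Mv x₁ x₂) with ht | ht
  · have hrb : rbq x₁ x₂ t = ((mbn x₁ x₂ t : ℕ) : ℚ) := by
      unfold rbq; rw [if_pos (by omega)]
    have hrb' : rbq x₁ x₂ (t+1) = ((mbn x₁ x₂ (t+1) : ℕ) : ℚ) := by
      unfold rbq; rw [if_pos (by omega)]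
    have hn1 : min t (Mv x₁ x₂) + 1 - Mv x₁ x₂ = 0 := by omega
    rw [hrb, hrb', hn1]
    rw [show (((mbn x₁ x₂ t : ℕ) : ℚ)
          + ((ufn x₁ x₂ (t+1) - vfn x₂ (t+1) : ℕ) : ℚ) + ((vfn x₂ (t+1) - ufn x₁ x₂ (t+1) : ℕ) : ℚ)
          - ((ufn x₁ x₂ t - vfn x₂ t : ℕ) : ℚ) - ((vfn x₂ t - ufn x₁ x₂ t : ℕ) : ℚ)
          - ((0 : ℕ) : ℚ)) = ((mbn x₁ x₂ (t+1) : ℕ) : ℚ) from by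
      unfold mbn; push_cast; ring]
    exact relu_of_nonneg (Nat.cast_nonneg _)
  · have e1 : ufn x₁ x₂ (t+1) = ufn x₁ x₂ t := ufn_stab _ _ _ ht
    have e2 : vfn x₂ (t+1) = vfn x₂ t := vfn_stab _ _ x₁ ht
    have hn1 : min t (Mv x₁ x₂) + 1 - Mv x₁ x₂ = 1 := by omega
    rw [e1, e2, hn1, rbq_ge x₁ x₂ t ht, rbq_ge x₁ x₂ (t+1) (by omega)]
    rw [show (max ((mbn x₁ x₂ (Mv x₁ x₂) : ℚ) - ((t - Mv x₁ x₂ : ℕ) : ℚ)) 0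
          + ((ufn x₁ x₂ t - vfn x₂ t : ℕ) : ℚ) + ((vfn x₂ t - ufn x₁ x₂ t : ℕ) : ℚ)
          - ((ufn x₁ x₂ t - vfn x₂ t : ℕ) : ℚ) - ((vfn x₂ t - ufn x₁ x₂ t : ℕ) : ℚ)
          - ((1 : ℕ) : ℚ))
        = (max ((mbn x₁ x₂ (Mv x₁ x₂) : ℚ) - ((t - Mv x₁ x₂ : ℕ) : ℚ)) 0 - 1) from by
      push_cast; ring]
    rw [relu_max_sub_one]
    congr 1
    rw [Nat.cast_sub (by omega), Nat.cast_sub (by omega)]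
    push_cast
    ring

lemma Phis14 : Phi a (sig a x₁ x₂ t) 14 = Zbq x₁ x₂ (t+1) := by
  have h1 : Phi a (sig a x₁ x₂ t) 14
      = relu (Zbq x₁ x₂ t
          + ((ufn x₁ x₂ (t+1) - vfn x₂ (t+1) : ℕ) : ℚ) + ((vfn x₂ (t+1) - ufn x₁ x₂ (t+1) : ℕ) : ℚ)
          - ((ufn x₁ x₂ t - vfn x₂ t : ℕ) : ℚ) - ((vfn x₂ t - ufn x₁ x₂ t : ℕ) : ℚ)
          - 2 * ((min t (Mv x₁ x₂) + 1 - Mv x₁ x₂ : ℕ) : ℚ)) := by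
    simp [Phi, V2s17, V2s14, V2s15, V2s12, V2s13, V2s18]
    all_goals (congr 1; push_cast; ring)
  rw [h1]
  rcases Nat.lt_or_ge t (Mv x₁ x₂) with ht | ht
  · have hrb : Zbq x₁ x₂ t = ((mbn x₁ x₂ t : ℕ) : ℚ) := by
      unfold Zbq; rw [if_pos (by omega)]
    have hrb' : Zbq x₁ x₂ (t+1) = ((mbn x₁ x₂ (t+1) : ℕ) : ℚ) := by
      unfold Zbq; rw [if_pos (by omega)]
    have hn1 : min t (Mv x₁ x₂) + 1 - Mv x₁ x₂ = 0 := by omega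
    rw [hrb, hrb', hn1]
    rw [show (((mbn x₁ x₂ t : ℕ) : ℚ)
          + ((ufn x₁ x₂ (t+1) - vfn x₂ (t+1) : ℕ) : ℚ) + ((vfn x₂ (t+1) - ufn x₁ x₂ (t+1) : ℕ) : ℚ)
          - ((ufn x₁ x₂ t - vfn x₂ t : ℕ) : ℚ) - ((vfn x₂ t - ufn x₁ x₂ t : ℕ) : ℚ)
          - 2 * ((0 : ℕ) : ℚ)) = ((mbn x₁ x₂ (t+1) : ℕ) : ℚ) from by
      unfold mbn; push_cast; ring]
    exact relu_of_nonneg (Nat.cast_nonneg _)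
  · have e1 : ufn x₁ x₂ (t+1) = ufn x₁ x₂ t := ufn_stab _ _ _ ht
    have e2 : vfn x₂ (t+1) = vfn x₂ t := vfn_stab _ _ x₁ ht
    have hn1 : min t (Mv x₁ x₂) + 1 - Mv x₁ x₂ = 1 := by omega
    rw [e1, e2, hn1, Zbq_ge x₁ x₂ t ht, Zbq_ge x₁ x₂ (t+1) (by omega)]
    rw [show (max ((mbn x₁ x₂ (Mv x₁ x₂) : ℚ) - 2 * ((t - Mv x₁ x₂ : ℕ) : ℚ)) 0
          + ((ufn x₁ x₂ t - vfn x₂ t : ℕ) : ℚ) + ((vfn x₂ t - ufn x₁ x₂ t : ℕ) : ℚ)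
          - ((ufn x₁ x₂ t - vfn x₂ t : ℕ) : ℚ) - ((vfn x₂ t - ufn x₁ x₂ t : ℕ) : ℚ)
          - 2 * ((1 : ℕ) : ℚ))
        = (max ((mbn x₁ x₂ (Mv x₁ x₂) : ℚ) - 2 * ((t - Mv x₁ x₂ : ℕ) : ℚ)) 0 - 2) from by
      push_cast; ring]
    rw [relu_max_sub_two]
    congr 1
    rw [Nat.cast_sub (by omega), Nat.cast_sub (by omega)]
    push_cast
    ring

lemma step_eq : Fnet a (sig a x₁ x₂ t) = sig a x₁ x₂ (t+1) := by
  funext i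
  rw [Fnet_eval]
  obtain ⟨k, hk⟩ := i
  show Phi a (sig a x₁ x₂ t) k = sigc a x₁ x₂ (t+1) k
  interval_cases k
  · rw [Phis0]; simp [sigc]
  · rw [Phis1]; simp [sigc]
  · rw [Phis2]; simp [sigc]
  · rw [Phis3]; simp [sigc]
  · rw [Phis4]; simp [sigc]
  · rw [Phis5]; simp [sigc]
  · rw [Phis6]; simp [sigc]
  · rw [Phis7]; simp [sigc]
  · rw [Phis8]; simp [sigc]
  · rw [Phis9]; simp [sigc]
  · rw [Phis10]; simp [sigc]
  · rw [Phis11]; simp [sigc]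
  · rw [Phis12]; simp [sigc]
  · rw [Phis13]; simp [sigc]
  · rw [Phis14]; simp [sigc]
  · rw [Phis15]; simp [sigc]

end Vals3

-- ===================== iteration and stabilization =====================

def Tv (x₁ x₂ : ℕ) : ℕ := Mv x₁ x₂ + man x₁ x₂ (Mv x₁ x₂) + 1

section Iter
variable (a : ℚ) (x₁ x₂ : ℕ)

lemma sig_zero : sig a x₁ x₂ 0 = initVec 16 [1, 0, (x₁ : ℚ), (x₂ : ℚ)] := by
  funext i
  obtain ⟨k, hk⟩ := i
  show sigc a x₁ x₂ 0 k = _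
  unfold initVec
  interval_cases k <;>
    simp [sigc, raq, Zaq, rbq, Zbq, Baq, Bbq, man, mbn, ufn, vfn, tri, List.getD]

lemma iter_eq (t : ℕ) :
    (Fnet a)^[t] (initVec 16 [1, 0, (x₁ : ℚ), (x₂ : ℚ)]) = sig a x₁ x₂ t := by
  induction t with
  | zero => rw [Function.iterate_zero_apply, sig_zero]
  | succ t ih => rw [Function.iterate_succ_apply', ih, step_eq]

lemma mbn_le_man (t : ℕ) : mbn x₁ x₂ t ≤ man x₁ x₂ t := by
  unfold mbn man; omega

lemma raq_zero (t : ℕ) (h : Mv x₁ x₂ + man x₁ x₂ (Mv x₁ x₂) ≤ t) : raq x₁ x₂ t = 0 := by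
  rw [raq_ge x₁ x₂ t (by omega)]
  rw [max_cast_sub]
  rw [show man x₁ x₂ (Mv x₁ x₂) - (t - Mv x₁ x₂) = 0 from by omega]
  rfl

lemma Zaq_zero (t : ℕ) (h : Mv x₁ x₂ + man x₁ x₂ (Mv x₁ x₂) ≤ t) : Zaq x₁ x₂ t = 0 := by
  rw [Zaq_ge x₁ x₂ t (by omega)]
  rw [show (2 : ℚ) * ((t - Mv x₁ x₂ : ℕ) : ℚ) = ((2 * (t - Mv x₁ x₂) : ℕ) : ℚ) from by
    push_cast; ring]
  rw [max_cast_sub]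
  rw [show man x₁ x₂ (Mv x₁ x₂) - 2 * (t - Mv x₁ x₂) = 0 from by omega]
  rfl

lemma rbq_zero (t : ℕ) (h : Mv x₁ x₂ + man x₁ x₂ (Mv x₁ x₂) ≤ t) : rbq x₁ x₂ t = 0 := by
  have hm := mbn_le_man x₁ x₂ (Mv x₁ x₂)
  rw [rbq_ge x₁ x₂ t (by omega)]
  rw [max_cast_sub]
  rw [show mbn x₁ x₂ (Mv x₁ x₂) - (t - Mv x₁ x₂) = 0 from by omega]
  rfl

lemma Zbq_zero (t : ℕ) (h : Mv x₁ x₂ + man x₁ x₂ (Mv x₁ x₂) ≤ t) : Zbq x₁ x₂ t = 0 := by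
  have hm := mbn_le_man x₁ x₂ (Mv x₁ x₂)
  rw [Zbq_ge x₁ x₂ t (by omega)]
  rw [show (2 : ℚ) * ((t - Mv x₁ x₂ : ℕ) : ℚ) = ((2 * (t - Mv x₁ x₂) : ℕ) : ℚ) from by
    push_cast; ring]
  rw [max_cast_sub]
  rw [show mbn x₁ x₂ (Mv x₁ x₂) - 2 * (t - Mv x₁ x₂) = 0 from by omega]
  rfl

lemma Baq_stab (t : ℕ) (h : Mv x₁ x₂ + man x₁ x₂ (Mv x₁ x₂) ≤ t) :
    Baq x₁ x₂ t = Baq x₁ x₂ (Mv x₁ x₂ + man x₁ x₂ (Mv x₁ x₂)) := by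
  induction t with
  | zero => rw [show Mv x₁ x₂ + man x₁ x₂ (Mv x₁ x₂) = 0 from by omega]
  | succ t ih =>
    rcases Nat.lt_or_ge t (Mv x₁ x₂ + man x₁ x₂ (Mv x₁ x₂)) with h2 | h2
    · rw [show Mv x₁ x₂ + man x₁ x₂ (Mv x₁ x₂) = t + 1 from by omega]
    · rw [show Baq x₁ x₂ (t+1) = Baq x₁ x₂ t + relu (raq x₁ x₂ t - Zaq x₁ x₂ t) from
        Finset.sum_range_succ _ _]
      rw [raq_zero x₁ x₂ t h2, Zaq_zero x₁ x₂ t h2, ih h2]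
      simp [relu]

lemma Bbq_stab (t : ℕ) (h : Mv x₁ x₂ + man x₁ x₂ (Mv x₁ x₂) ≤ t) :
    Bbq x₁ x₂ t = Bbq x₁ x₂ (Mv x₁ x₂ + man x₁ x₂ (Mv x₁ x₂)) := by
  induction t with
  | zero => rw [show Mv x₁ x₂ + man x₁ x₂ (Mv x₁ x₂) = 0 from by omega]
  | succ t ih =>
    rcases Nat.lt_or_ge t (Mv x₁ x₂ + man x₁ x₂ (Mv x₁ x₂)) with h2 | h2
    · rw [show Mv x₁ x₂ + man x₁ x₂ (Mv x₁ x₂) = t + 1 from by omega]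
    · rw [show Bbq x₁ x₂ (t+1) = Bbq x₁ x₂ t + relu (rbq x₁ x₂ t - Zbq x₁ x₂ t) from
        Finset.sum_range_succ _ _]
      rw [rbq_zero x₁ x₂ t h2, Zbq_zero x₁ x₂ t h2, ih h2]
      simp [relu]

lemma sig_stab (t : ℕ) (h : Tv x₁ x₂ ≤ t) : sig a x₁ x₂ t = sig a x₁ x₂ (Tv x₁ x₂) := by
  have hT : Tv x₁ x₂ = Mv x₁ x₂ + man x₁ x₂ (Mv x₁ x₂) + 1 := rfl
  have h1 : x₁ + x₂ ≤ Mv x₁ x₂ := by unfold Mv; omega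
  have h2 : x₁ ≤ Mv x₁ x₂ := by unfold Mv; omega
  have h3 : x₂ ≤ Mv x₁ x₂ := by unfold Mv; omega
  funext i
  obtain ⟨k, hk⟩ := i
  show sigc a x₁ x₂ t k = sigc a x₁ x₂ (Tv x₁ x₂) k
  interval_cases k
  · simp only [sigc]; rw [if_neg (by omega), if_neg (by omega)]
  · rfl
  · rfl
  · rfl
  · simp only [sigc]; rw [if_neg (by omega), if_neg (by omega)]
    rw [Baq_stab x₁ x₂ (t-1) (by omega), Baq_stab x₁ x₂ (Tv x₁ x₂ - 1) (by omega),
        Bbq_stab x₁ x₂ (t-1) (by omega), Bbq_stab x₁ x₂ (Tv x₁ x₂ - 1) (by omega)]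
  · simp only [sigc]; congr 1; omega
  · simp only [sigc]
    rw [tri_stab (x₁+x₂) t (by omega), tri_stab (x₁+x₂) (Tv x₁ x₂) (by omega)]
  · simp only [sigc]
    rw [tri_stab x₁ t (by omega), tri_stab x₁ (Tv x₁ x₂) (by omega)]
  · simp only [sigc]
    rw [tri_stab x₂ t (by omega), tri_stab x₂ (Tv x₁ x₂) (by omega)]
  · simp only [sigc]; congr 1; omega
  · simp only [sigc]; rw [raq_zero x₁ x₂ t (by omega), raq_zero x₁ x₂ (Tv x₁ x₂) (by omega)]
  · simp only [sigc]; rw [Zaq_zero x₁ x₂ t (by omega), Zaq_zero x₁ x₂ (Tv x₁ x₂) (by omega)]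
  · simp only [sigc]; rw [Baq_stab x₁ x₂ t (by omega), Baq_stab x₁ x₂ (Tv x₁ x₂) (by omega)]
  · simp only [sigc]; rw [rbq_zero x₁ x₂ t (by omega), rbq_zero x₁ x₂ (Tv x₁ x₂) (by omega)]
  · simp only [sigc]; rw [Zbq_zero x₁ x₂ t (by omega), Zbq_zero x₁ x₂ (Tv x₁ x₂) (by omega)]
  · simp only [sigc]; rw [Bbq_stab x₁ x₂ t (by omega), Bbq_stab x₁ x₂ (Tv x₁ x₂) (by omega)]

end Iter

-- ===================== final values =====================

lemma sum_min_succ (m : ℕ) : (∑ i ∈ Finset.range (m+1), min i (m - i)) = m * m / 4 := by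
  induction m with
  | zero => simp
  | succ m ih =>
    have hlast : min (m+1) ((m+1) - (m+1)) = 0 := by omega
    rw [Finset.sum_range_succ, hlast, add_zero]
    have hsplit : (∑ i ∈ Finset.range (m+1), min i (m + 1 - i))
        = (∑ i ∈ Finset.range (m+1), (min i (m - i) + if m < 2*i then 1 else 0)) := by
      refine Finset.sum_congr rfl fun i hi => ?_
      have := Finset.mem_range.1 hi
      split <;> omega
    rw [hsplit, Finset.sum_add_distrib, ih]
    rw [← Finset.card_filter]
    have hfil : (Finset.range (m+1)).filter (fun i => m < 2*i) = Finset.Ico (m/2 + 1) (m+1) := by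
      ext i
      simp [Finset.mem_filter, Finset.mem_range, Finset.mem_Ico]
      omega
    rw [hfil, Nat.card_Ico]
    rcases Nat.even_or_odd m with ⟨p, hp⟩ | ⟨p, hp⟩ <;> subst hp
    · have e1 : (p + p) * (p + p) = 4 * (p * p) := by ring
      have e2 : (p + p + 1) * (p + p + 1) = 4 * (p * p) + 4 * p + 1 := by ring
      omega
    · have e1 : (2*p + 1) * (2*p + 1) = 4 * (p * p) + 4 * p + 1 := by ring
      have e2 : (2*p + 1 + 1) * (2*p + 1 + 1) = 4 * (p * p) + 8 * p + 4 := by ring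
      omega

lemma sum_min_add (m k : ℕ) : (∑ i ∈ Finset.range (m + k), min i (m - i)) = m * m / 4 := by
  induction k with
  | zero =>
    have h := sum_min_succ m
    rw [Finset.sum_range_succ] at h
    have hlast : min m (m - m) = 0 := by omega
    rw [hlast, add_zero] at h
    exact h
  | succ k ih =>
    rw [show m + (k+1) = (m+k) + 1 from rfl, Finset.sum_range_succ]
    have hlast : min (m+k) (m - (m+k)) = 0 := by
      rcases Nat.eq_zero_or_pos (m + k) with h0 | h0 <;> omega
    rw [hlast, add_zero, ih]

section Final
variable (a : ℚ) (x₁ x₂ : ℕ)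

lemma inc_val (n : ℕ) :
    relu (raq x₁ x₂ (Mv x₁ x₂ + n) - Zaq x₁ x₂ (Mv x₁ x₂ + n))
      = ((min n (man x₁ x₂ (Mv x₁ x₂) - n) : ℕ) : ℚ) := by
  have h1 : raq x₁ x₂ (Mv x₁ x₂ + n) = ((man x₁ x₂ (Mv x₁ x₂) - n : ℕ) : ℚ) := by
    rw [raq_ge x₁ x₂ _ (by omega), show Mv x₁ x₂ + n - Mv x₁ x₂ = n from by omega, max_cast_sub]
  have h2 : Zaq x₁ x₂ (Mv x₁ x₂ + n) = ((man x₁ x₂ (Mv x₁ x₂) - 2 * n : ℕ) : ℚ) := by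
    rw [Zaq_ge x₁ x₂ _ (by omega), show Mv x₁ x₂ + n - Mv x₁ x₂ = n from by omega,
      show (2 : ℚ) * ((n : ℕ) : ℚ) = ((2 * n : ℕ) : ℚ) from by push_cast; ring, max_cast_sub]
  rw [h1, h2, relu_cast_sub]
  congr 1
  omega

lemma inc_val_b (n : ℕ) :
    relu (rbq x₁ x₂ (Mv x₁ x₂ + n) - Zbq x₁ x₂ (Mv x₁ x₂ + n))
      = ((min n (mbn x₁ x₂ (Mv x₁ x₂) - n) : ℕ) : ℚ) := by
  have h1 : rbq x₁ x₂ (Mv x₁ x₂ + n) = ((mbn x₁ x₂ (Mv x₁ x₂) - n : ℕ) : ℚ) := by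
    rw [rbq_ge x₁ x₂ _ (by omega), show Mv x₁ x₂ + n - Mv x₁ x₂ = n from by omega, max_cast_sub]
  have h2 : Zbq x₁ x₂ (Mv x₁ x₂ + n) = ((mbn x₁ x₂ (Mv x₁ x₂) - 2 * n : ℕ) : ℚ) := by
    rw [Zbq_ge x₁ x₂ _ (by omega), show Mv x₁ x₂ + n - Mv x₁ x₂ = n from by omega,
      show (2 : ℚ) * ((n : ℕ) : ℚ) = ((2 * n : ℕ) : ℚ) from by push_cast; ring, max_cast_sub]
  rw [h1, h2, relu_cast_sub]
  congr 1
  omega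

lemma Baq_MA (n : ℕ) :
    Baq x₁ x₂ (Mv x₁ x₂ + n) = ((∑ i ∈ Finset.range n, min i (man x₁ x₂ (Mv x₁ x₂) - i) : ℕ) : ℚ) := by
  induction n with
  | zero =>
    rw [Nat.add_zero]
    rw [show ((∑ i ∈ Finset.range 0, min i (man x₁ x₂ (Mv x₁ x₂) - i) : ℕ) : ℚ) = 0 from by simp]
    refine Finset.sum_eq_zero fun j hj => ?_
    have hj' := Finset.mem_range.1 hj
    have e1 : raq x₁ x₂ j = ((man x₁ x₂ j : ℕ) : ℚ) := by unfold raq; rw [if_pos (by omega)]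
    have e2 : Zaq x₁ x₂ j = ((man x₁ x₂ j : ℕ) : ℚ) := by unfold Zaq; rw [if_pos (by omega)]
    rw [e1, e2, sub_self]
    simp [relu]
  | succ n ih =>
    rw [show Mv x₁ x₂ + (n+1) = (Mv x₁ x₂ + n) + 1 from rfl]
    rw [show Baq x₁ x₂ ((Mv x₁ x₂ + n) + 1)
        = Baq x₁ x₂ (Mv x₁ x₂ + n)
          + relu (raq x₁ x₂ (Mv x₁ x₂ + n) - Zaq x₁ x₂ (Mv x₁ x₂ + n)) from
      Finset.sum_range_succ _ _]
    rw [ih, inc_val, Finset.sum_range_succ]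
    push_cast
    ring

lemma Bbq_MA (n : ℕ) :
    Bbq x₁ x₂ (Mv x₁ x₂ + n) = ((∑ i ∈ Finset.range n, min i (mbn x₁ x₂ (Mv x₁ x₂) - i) : ℕ) : ℚ) := by
  induction n with
  | zero =>
    rw [Nat.add_zero]
    rw [show ((∑ i ∈ Finset.range 0, min i (mbn x₁ x₂ (Mv x₁ x₂) - i) : ℕ) : ℚ) = 0 from by simp]
    refine Finset.sum_eq_zero fun j hj => ?_
    have hj' := Finset.mem_range.1 hj
    have e1 : rbq x₁ x₂ j = ((mbn x₁ x₂ j : ℕ) : ℚ) := by unfold rbq; rw [if_pos (by omega)]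
    have e2 : Zbq x₁ x₂ j = ((mbn x₁ x₂ j : ℕ) : ℚ) := by unfold Zbq; rw [if_pos (by omega)]
    rw [e1, e2, sub_self]
    simp [relu]
  | succ n ih =>
    rw [show Mv x₁ x₂ + (n+1) = (Mv x₁ x₂ + n) + 1 from rfl]
    rw [show Bbq x₁ x₂ ((Mv x₁ x₂ + n) + 1)
        = Bbq x₁ x₂ (Mv x₁ x₂ + n)
          + relu (rbq x₁ x₂ (Mv x₁ x₂ + n) - Zbq x₁ x₂ (Mv x₁ x₂ + n)) from
      Finset.sum_range_succ _ _]
    rw [ih, inc_val_b, Finset.sum_range_succ]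
    push_cast
    ring

lemma Baq_final :
    Baq x₁ x₂ (Mv x₁ x₂ + man x₁ x₂ (Mv x₁ x₂))
      = ((man x₁ x₂ (Mv x₁ x₂) * man x₁ x₂ (Mv x₁ x₂) / 4 : ℕ) : ℚ) := by
  rw [Baq_MA]
  congr 1
  have := sum_min_add (man x₁ x₂ (Mv x₁ x₂)) 0
  rw [Nat.add_zero] at this
  exact this

lemma Bbq_final :
    Bbq x₁ x₂ (Mv x₁ x₂ + man x₁ x₂ (Mv x₁ x₂))
      = ((mbn x₁ x₂ (Mv x₁ x₂) * mbn x₁ x₂ (Mv x₁ x₂) / 4 : ℕ) : ℚ) := by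
  rw [Bbq_MA]
  congr 1
  have hm := mbn_le_man x₁ x₂ (Mv x₁ x₂)
  have := sum_min_add (mbn x₁ x₂ (Mv x₁ x₂)) (man x₁ x₂ (Mv x₁ x₂) - mbn x₁ x₂ (Mv x₁ x₂))
  rw [show mbn x₁ x₂ (Mv x₁ x₂) + (man x₁ x₂ (Mv x₁ x₂) - mbn x₁ x₂ (Mv x₁ x₂))
      = man x₁ x₂ (Mv x₁ x₂) from by omega] at this
  exact this

lemma ufn_M : ufn x₁ x₂ (Mv x₁ x₂) = x₁ * x₂ := by
  have ta : tri (x₁+x₂) (Mv x₁ x₂) = tri (x₁+x₂) (x₁+x₂) := tri_stab _ _ (by unfold Mv; omega)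
  have tb : tri x₁ (Mv x₁ x₂) = tri x₁ x₁ := tri_stab _ _ (by unfold Mv; omega)
  have tc : tri x₂ (Mv x₁ x₂) = tri x₂ x₂ := tri_stab _ _ (by unfold Mv; omega)
  have h6 := tri_le x₁ x₂ (Mv x₁ x₂)
  rw [ta, tb, tc] at h6
  unfold ufn
  rw [ta, tb, tc]
  have g1 := tri_self (x₁ + x₂)
  have g2 := tri_self x₁
  have g3 := tri_self x₂
  have e : (x₁ + x₂) * (x₁ + x₂) = x₁*x₁ + 2*(x₁*x₂) + x₂*x₂ := by ring
  omega

lemma vfn_M : vfn x₂ (Mv x₁ x₂) = x₂ * x₂ := by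
  have tc : tri x₂ (Mv x₁ x₂) = tri x₂ x₂ := tri_stab _ _ (by unfold Mv; omega)
  unfold vfn
  rw [tc]
  have g3 := tri_self x₂
  have e : min (Mv x₁ x₂) x₂ = x₂ := by unfold Mv; omega
  omega

lemma floor_prod (u v : ℕ) :
    (u+v)*(u+v)/4 - ((u-v)+(v-u)) * ((u-v)+(v-u))/4 = u*v
    ∧ ((u-v)+(v-u)) * ((u-v)+(v-u))/4 ≤ (u+v)*(u+v)/4 := by
  have hd : (u+v)*(u+v) = ((u-v)+(v-u))*((u-v)+(v-u)) + 4*(u*v) := by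
    rcases le_total u v with h | h
    · rw [Nat.sub_eq_zero_of_le h]; zify [h]; ring
    · rw [Nat.sub_eq_zero_of_le h]; zify [h]; ring
  constructor <;> omega

lemma out_final (ha : 0 ≤ a) : sigc a x₁ x₂ (Tv x₁ x₂) 4 = a * (x₁ : ℚ) * (x₂ : ℚ)^3 := by
  have hT : Tv x₁ x₂ = Mv x₁ x₂ + man x₁ x₂ (Mv x₁ x₂) + 1 := rfl
  show (if Tv x₁ x₂ = 0 then (0:ℚ)
    else relu (a * Baq x₁ x₂ (Tv x₁ x₂ - 1) - a * Bbq x₁ x₂ (Tv x₁ x₂ - 1))) = _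
  rw [if_neg (by omega), show Tv x₁ x₂ - 1 = Mv x₁ x₂ + man x₁ x₂ (Mv x₁ x₂) from by omega]
  rw [Baq_final, Bbq_final]
  have hman : man x₁ x₂ (Mv x₁ x₂) = ufn x₁ x₂ (Mv x₁ x₂) + vfn x₂ (Mv x₁ x₂) := rfl
  have hmbn : mbn x₁ x₂ (Mv x₁ x₂)
      = (ufn x₁ x₂ (Mv x₁ x₂) - vfn x₂ (Mv x₁ x₂)) + (vfn x₂ (Mv x₁ x₂) - ufn x₁ x₂ (Mv x₁ x₂)) := rfl
  have hfp := floor_prod (ufn x₁ x₂ (Mv x₁ x₂)) (vfn x₂ (Mv x₁ x₂))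
  rw [hman, hmbn]
  rw [show (a * (((ufn x₁ x₂ (Mv x₁ x₂) + vfn x₂ (Mv x₁ x₂)) * (ufn x₁ x₂ (Mv x₁ x₂) + vfn x₂ (Mv x₁ x₂)) / 4 : ℕ) : ℚ)
      - a * ((((ufn x₁ x₂ (Mv x₁ x₂) - vfn x₂ (Mv x₁ x₂)) + (vfn x₂ (Mv x₁ x₂) - ufn x₁ x₂ (Mv x₁ x₂)))
          * ((ufn x₁ x₂ (Mv x₁ x₂) - vfn x₂ (Mv x₁ x₂)) + (vfn x₂ (Mv x₁ x₂) - ufn x₁ x₂ (Mv x₁ x₂))) / 4 : ℕ) : ℚ))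
      = a * ((((ufn x₁ x₂ (Mv x₁ x₂) + vfn x₂ (Mv x₁ x₂)) * (ufn x₁ x₂ (Mv x₁ x₂) + vfn x₂ (Mv x₁ x₂)) / 4
          - ((ufn x₁ x₂ (Mv x₁ x₂) - vfn x₂ (Mv x₁ x₂)) + (vfn x₂ (Mv x₁ x₂) - ufn x₁ x₂ (Mv x₁ x₂)))
          * ((ufn x₁ x₂ (Mv x₁ x₂) - vfn x₂ (Mv x₁ x₂)) + (vfn x₂ (Mv x₁ x₂) - ufn x₁ x₂ (Mv x₁ x₂))) / 4 : ℕ) : ℚ)) from by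
    rw [Nat.cast_sub hfp.2]; ring]
  rw [hfp.1, relu_of_nonneg (by positivity), ufn_M, vfn_M]
  push_cast
  ring

end Final

/-- For every rational `a ≥ 0` there is a recurrent ReLU MLP which, started
from `(1, 0, x₁, x₂, 0, …, 0)`, eventually stabilizes with first coordinate `0` and fifth
coordinate `a·x₁·x₂³`. -/
theorem mlp_computes_message_length (a : ℚ) (ha : 0 ≤ a) :
    ∃ (d : ℕ) (hd : 5 ≤ d) (F : MLP d d), ∀ x₁ x₂ : ℕ,
      ∃ T : ℕ,
        (∀ t, T ≤ t →
          F.eval^[t] (initVec d [1, 0, (x₁ : ℚ), (x₂ : ℚ)]) =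
            F.eval^[T] (initVec d [1, 0, (x₁ : ℚ), (x₂ : ℚ)])) ∧
        F.eval^[T] (initVec d [1, 0, (x₁ : ℚ), (x₂ : ℚ)]) ⟨0, by omega⟩ = 0 ∧
        F.eval^[T] (initVec d [1, 0, (x₁ : ℚ), (x₂ : ℚ)]) ⟨4, by omega⟩
          = a * (x₁ : ℚ) * (x₂ : ℚ) ^ 3 := by
  refine ⟨16, by omega, ⟨Fnet a, Fnet_isMLP a⟩, fun x₁ x₂ => ⟨Tv x₁ x₂, ?_, ?_, ?_⟩⟩
  · intro t ht
    show (Fnet a)^[t] _ = (Fnet a)^[Tv x₁ x₂] _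
    rw [iter_eq, iter_eq, sig_stab a x₁ x₂ t ht]
  · show (Fnet a)^[Tv x₁ x₂] _ ⟨0, by omega⟩ = 0
    rw [iter_eq]
    show sigc a x₁ x₂ (Tv x₁ x₂) 0 = 0
    show (if Tv x₁ x₂ = 0 then (1:ℚ) else 0) = 0
    rw [if_neg (by show Mv x₁ x₂ + man x₁ x₂ (Mv x₁ x₂) + 1 ≠ 0; omega)]
  · show (Fnet a)^[Tv x₁ x₂] _ ⟨4, by omega⟩ = _
    rw [iter_eq]
    exact out_final a x₁ x₂ ha
end
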